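/- Let Γ be a multiset of D-formulas and let G be a G-formula such that the sequent G⊃⊥, Γ → G has a C-proof. Then for every sequent Σ → Π that appears in this C-proof, there is some F ∈ Π such that Σ → F has an I-proof. -/

import Mathlib

set_option maxHeartbeats 1000000

/-- Terms of a first-order language: variables (de Bruijn indices for
quantified variables) and constants. -/
inductive Tm : Type
  | var : ℕ → Tm
  | const : ℕ → Tm

namespace Tm

/-- Substitution of the term `u` for the variable with index `k`. -/
def subst (k : ℕ) (u : Tm) : Tm → Tm
  | var n => if n = k then u else var n
  | const c => const c

/-- The constant `c` occurs in a term. -/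
def constIn (c : ℕ) : Tm → Prop
  | var _ => False
  | const d => d = c

end Tm

/-- First-order formulas over the primitives ⊤, ⊥, ∧, ∨, ⊃, ∃, ∀.
Quantifiers are represented with de Bruijn indices. -/
inductive Fm : Type
  | top : Fm
  | bot : Fm
  | atom : ℕ → List Tm → Fm
  | conj : Fm → Fm → Fm
  | disj : Fm → Fm → Fm
  | imp : Fm → Fm → Fm
  | ex : Fm → Fm
  | all : Fm → Fm

namespace Fm

/-- Substitution of a term for the variable with de Bruijn index `k`. -/
def subst (k : ℕ) (u : Tm) : Fm → Fm
  | top => top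
  | bot => bot
  | atom p ts => atom p (ts.map (Tm.subst k u))
  | conj a b => conj (subst k u a) (subst k u b)
  | disj a b => disj (subst k u a) (subst k u b)
  | imp a b => imp (subst k u a) (subst k u b)
  | ex a => ex (subst (k + 1) u a)
  | all a => all (subst (k + 1) u a)

/-- `[t/x]B`: instantiation of the outermost bound variable of the body of a
quantified formula with the term `u`. -/
def inst (u : Tm) (a : Fm) : Fm := subst 0 u a

/-- Atomic formulas (⊤ and ⊥ are *not* atomic). -/
def isAtom : Fm → Prop
  | atom _ _ => True
  | _ => False

/-- Formulas that need no right-introduction rule in a uniform/O_G proof: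
atomic formulas and ⊥. -/
def neutral (F : Fm) : Prop := F.isAtom ∨ F = bot

/-- The constant `c` occurs in a formula. -/
def constIn (c : ℕ) : Fm → Prop
  | top => False
  | bot => False
  | atom _ ts => ∃ t ∈ ts, t.constIn c
  | conj a b => constIn c a ∨ constIn c b
  | disj a b => constIn c a ∨ constIn c b
  | imp a b => constIn c a ∨ constIn c b
  | ex a => constIn c a
  | all a => constIn c a

end Fm

/-- The eigenvariable (constant) `c` does not occur in the sequent `Γ → Δ`. -/
def FreshSeq (c : ℕ) (Γ Δ : Multiset Fm) : Prop :=
  (∀ F ∈ Γ, ¬ F.constIn c) ∧ ∀ F ∈ Δ, ¬ F.constIn c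

/-- The sequent `Γ → Δ` is an axiom: ⊤ ∈ Δ, or some `A` that is ⊥ or atomic
belongs to both `Γ` and `Δ`. -/
def AxSeq (Γ Δ : Multiset Fm) : Prop :=
  Fm.top ∈ Δ ∨ ∃ A : Fm, (A = Fm.bot ∨ A.isAtom) ∧ A ∈ Γ ∧ A ∈ Δ

/-- C-proofs: arbitrary derivations in the sequent calculus of the paper.
Sequents are pairs of multisets of formulas. -/
inductive CProof : Multiset Fm → Multiset Fm → Type
  | ax {Γ Δ : Multiset Fm} (h : AxSeq Γ Δ) : CProof Γ Δ
  | contrL {B : Fm} {Γ Δ : Multiset Fm} (p : CProof (B ::ₘ B ::ₘ Γ) Δ) : CProof (B ::ₘ Γ) Δ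
  | contrR {B : Fm} {Γ Δ : Multiset Fm} (p : CProof Γ (B ::ₘ B ::ₘ Δ)) : CProof Γ (B ::ₘ Δ)
  | botR {D : Fm} {Γ Δ : Multiset Fm} (p : CProof Γ (Fm.bot ::ₘ Δ)) : CProof Γ (D ::ₘ Δ)
  | andL {B D : Fm} {Γ Δ : Multiset Fm} (p : CProof (B ::ₘ D ::ₘ (B.conj D) ::ₘ Γ) Δ) :
      CProof ((B.conj D) ::ₘ Γ) Δ
  | andR {B D : Fm} {Γ Δ : Multiset Fm} (p : CProof Γ (B ::ₘ Δ)) (q : CProof Γ (D ::ₘ Δ)) :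
      CProof Γ ((B.conj D) ::ₘ Δ)
  | orL {B D : Fm} {Γ Δ : Multiset Fm} (p : CProof (B ::ₘ Γ) Δ) (q : CProof (D ::ₘ Γ) Δ) :
      CProof ((B.disj D) ::ₘ Γ) Δ
  | orR1 {B D : Fm} {Γ Δ : Multiset Fm} (p : CProof Γ (B ::ₘ Δ)) : CProof Γ ((B.disj D) ::ₘ Δ)
  | orR2 {B D : Fm} {Γ Δ : Multiset Fm} (p : CProof Γ (D ::ₘ Δ)) : CProof Γ ((B.disj D) ::ₘ Δ)
  | impL {B D : Fm} {Γ Δ Θ : Multiset Fm} (p : CProof ((B.imp D) ::ₘ Γ) (B ::ₘ Δ))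
      (q : CProof (D ::ₘ Γ) Θ) : CProof ((B.imp D) ::ₘ Γ) (Δ + Θ)
  | impR {B D : Fm} {Γ Δ : Multiset Fm} (p : CProof (B ::ₘ Γ) (D ::ₘ Δ)) :
      CProof Γ ((B.imp D) ::ₘ Δ)
  | allL {B : Fm} {Γ Δ : Multiset Fm} (t : Tm)
      (p : CProof ((B.inst t) ::ₘ (Fm.all B) ::ₘ Γ) Δ) : CProof ((Fm.all B) ::ₘ Γ) Δ
  | exR {B : Fm} {Γ Δ : Multiset Fm} (t : Tm) (p : CProof Γ ((B.inst t) ::ₘ Δ)) :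
      CProof Γ ((Fm.ex B) ::ₘ Δ)
  | exL {B : Fm} {Γ Δ : Multiset Fm} (c : ℕ) (hc : FreshSeq c ((Fm.ex B) ::ₘ Γ) Δ)
      (p : CProof ((B.inst (Tm.const c)) ::ₘ Γ) Δ) : CProof ((Fm.ex B) ::ₘ Γ) Δ
  | allR {B : Fm} {Γ Δ : Multiset Fm} (c : ℕ) (hc : FreshSeq c Γ ((Fm.all B) ::ₘ Δ))
      (p : CProof Γ ((B.inst (Tm.const c)) ::ₘ Δ)) : CProof Γ ((Fm.all B) ::ₘ Δ)

namespace CProof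

/-- An I-proof is a C-proof in which every sequent has exactly one formula in
its succedent. -/
def isI : ∀ (Γ Δ : Multiset Fm), CProof Γ Δ → Prop
  | _, _, @ax _ Δ _ => Multiset.card Δ = 1
  | _, _, @contrL _ _ Δ p => Multiset.card Δ = 1 ∧ isI _ _ p
  | _, _, @contrR B _ Δ p => Multiset.card (B ::ₘ Δ) = 1 ∧ isI _ _ p
  | _, _, @botR D _ Δ p => Multiset.card (D ::ₘ Δ) = 1 ∧ isI _ _ p
  | _, _, @andL _ _ _ Δ p => Multiset.card Δ = 1 ∧ isI _ _ p
  | _, _, @andR B D _ Δ p q => Multiset.card ((B.conj D) ::ₘ Δ) = 1 ∧ isI _ _ p ∧ isI _ _ q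
  | _, _, @orL _ _ _ Δ p q => Multiset.card Δ = 1 ∧ isI _ _ p ∧ isI _ _ q
  | _, _, @orR1 B D _ Δ p => Multiset.card ((B.disj D) ::ₘ Δ) = 1 ∧ isI _ _ p
  | _, _, @orR2 B D _ Δ p => Multiset.card ((B.disj D) ::ₘ Δ) = 1 ∧ isI _ _ p
  | _, _, @impL _ _ _ Δ Θ p q => Multiset.card (Δ + Θ) = 1 ∧ isI _ _ p ∧ isI _ _ q
  | _, _, @impR B D _ Δ p => Multiset.card ((B.imp D) ::ₘ Δ) = 1 ∧ isI _ _ p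
  | _, _, @allL _ _ Δ _ p => Multiset.card Δ = 1 ∧ isI _ _ p
  | _, _, @exR B _ Δ _ p => Multiset.card ((Fm.ex B) ::ₘ Δ) = 1 ∧ isI _ _ p
  | _, _, @exL _ _ Δ _ _ p => Multiset.card Δ = 1 ∧ isI _ _ p
  | _, _, @allR B _ Δ _ _ p => Multiset.card ((Fm.all B) ::ₘ Δ) = 1 ∧ isI _ _ p

end CProof

/-- Classical provability: `Γ ⊢_C F`. -/
def CProv (Γ : Multiset Fm) (F : Fm) : Prop := Nonempty (CProof Γ ({F} : Multiset Fm))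

/-- Intuitionistic provability: `Γ ⊢_I F`. -/
def IProv (Γ : Multiset Fm) (F : Fm) : Prop := ∃ p : CProof Γ ({F} : Multiset Fm), p.isI

namespace CProof

open Classical in
/-- The nonconstructiveness measure of a C-proof: the number of
nonconstructive occurrences of ∨-L and ⊃-R rules in it. -/
noncomputable def mu : ∀ (Γ Δ : Multiset Fm), CProof Γ Δ → ℕ
  | _, _, ax _ => 0
  | _, _, contrL p => mu _ _ p
  | _, _, contrR p => mu _ _ p
  | _, _, botR p => mu _ _ p
  | _, _, andL p => mu _ _ p
  | _, _, andR p q => mu _ _ p + mu _ _ q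
  | _, _, @orL B D Γ Δ p q =>
      mu _ _ p + mu _ _ q +
        (if ∃ F ∈ Δ, IProv (B ::ₘ Γ) F ∧ IProv (D ::ₘ Γ) F then 0 else 1)
  | _, _, orR1 p => mu _ _ p
  | _, _, orR2 p => mu _ _ p
  | _, _, impL p q => mu _ _ p + mu _ _ q
  | _, _, @impR B D Γ _ p => mu _ _ p + (if IProv (B ::ₘ Γ) D then 0 else 1)
  | _, _, allL _ p => mu _ _ p
  | _, _, exR _ p => mu _ _ p
  | _, _, exL _ _ p => mu _ _ p
  | _, _, allR _ _ p => mu _ _ p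

/-- The sequent `S → P` appears in the given C-proof. -/
def occursSeq : ∀ (Γ Δ : Multiset Fm), CProof Γ Δ → Multiset Fm → Multiset Fm → Prop
  | _, _, @ax Γ Δ _, S, P => Γ = S ∧ Δ = P
  | _, _, @contrL B Γ Δ p, S, P => ((B ::ₘ Γ) = S ∧ Δ = P) ∨ occursSeq _ _ p S P
  | _, _, @contrR B Γ Δ p, S, P => (Γ = S ∧ (B ::ₘ Δ) = P) ∨ occursSeq _ _ p S P
  | _, _, @botR D Γ Δ p, S, P => (Γ = S ∧ (D ::ₘ Δ) = P) ∨ occursSeq _ _ p S P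
  | _, _, @andL B D Γ Δ p, S, P => (((B.conj D) ::ₘ Γ) = S ∧ Δ = P) ∨ occursSeq _ _ p S P
  | _, _, @andR B D Γ Δ p q, S, P =>
      (Γ = S ∧ ((B.conj D) ::ₘ Δ) = P) ∨ occursSeq _ _ p S P ∨ occursSeq _ _ q S P
  | _, _, @orL B D Γ Δ p q, S, P =>
      (((B.disj D) ::ₘ Γ) = S ∧ Δ = P) ∨ occursSeq _ _ p S P ∨ occursSeq _ _ q S P
  | _, _, @orR1 B D Γ Δ p, S, P => (Γ = S ∧ ((B.disj D) ::ₘ Δ) = P) ∨ occursSeq _ _ p S P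
  | _, _, @orR2 B D Γ Δ p, S, P => (Γ = S ∧ ((B.disj D) ::ₘ Δ) = P) ∨ occursSeq _ _ p S P
  | _, _, @impL B D Γ Δ Θ p q, S, P =>
      (((B.imp D) ::ₘ Γ) = S ∧ (Δ + Θ) = P) ∨ occursSeq _ _ p S P ∨ occursSeq _ _ q S P
  | _, _, @impR B D Γ Δ p, S, P => (Γ = S ∧ ((B.imp D) ::ₘ Δ) = P) ∨ occursSeq _ _ p S P
  | _, _, @allL B Γ Δ _ p, S, P => (((Fm.all B) ::ₘ Γ) = S ∧ Δ = P) ∨ occursSeq _ _ p S P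
  | _, _, @exR B Γ Δ _ p, S, P => (Γ = S ∧ ((Fm.ex B) ::ₘ Δ) = P) ∨ occursSeq _ _ p S P
  | _, _, @exL B Γ Δ _ _ p, S, P => (((Fm.ex B) ::ₘ Γ) = S ∧ Δ = P) ∨ occursSeq _ _ p S P
  | _, _, @allR B Γ Δ _ _ p, S, P => (Γ = S ∧ ((Fm.all B) ::ₘ Δ) = P) ∨ occursSeq _ _ p S P

/-- `hasImpR p B S P D` holds when an ⊃-R rule with upper sequent
`B,S → P,D` and lower sequent `S → P,B⊃D` occurs in the proof `p`. -/
def hasImpR : ∀ (Γ Δ : Multiset Fm), CProof Γ Δ → Fm → Multiset Fm → Multiset Fm → Fm → Prop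
  | _, _, ax _, _, _, _, _ => False
  | _, _, contrL p, B, S, P, D => hasImpR _ _ p B S P D
  | _, _, contrR p, B, S, P, D => hasImpR _ _ p B S P D
  | _, _, botR p, B, S, P, D => hasImpR _ _ p B S P D
  | _, _, andL p, B, S, P, D => hasImpR _ _ p B S P D
  | _, _, andR p q, B, S, P, D => hasImpR _ _ p B S P D ∨ hasImpR _ _ q B S P D
  | _, _, orL p q, B, S, P, D => hasImpR _ _ p B S P D ∨ hasImpR _ _ q B S P D
  | _, _, orR1 p, B, S, P, D => hasImpR _ _ p B S P D
  | _, _, orR2 p, B, S, P, D => hasImpR _ _ p B S P D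
  | _, _, impL p q, B, S, P, D => hasImpR _ _ p B S P D ∨ hasImpR _ _ q B S P D
  | _, _, @impR B' D' Γ' Δ' p, B, S, P, D =>
      (B' = B ∧ Γ' = S ∧ Δ' = P ∧ D' = D) ∨ hasImpR _ _ p B S P D
  | _, _, allL _ p, B, S, P, D => hasImpR _ _ p B S P D
  | _, _, exR _ p, B, S, P, D => hasImpR _ _ p B S P D
  | _, _, exL _ _ p, B, S, P, D => hasImpR _ _ p B S P D
  | _, _, allR _ _ p, B, S, P, D => hasImpR _ _ p B S P D

/-- `hasOrL p B D S P` holds when an ∨-L rule with upper sequents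
`B,S → P` and `D,S → P` and lower sequent `B∨D,S → P` occurs in `p`. -/
def hasOrL : ∀ (Γ Δ : Multiset Fm), CProof Γ Δ → Fm → Fm → Multiset Fm → Multiset Fm → Prop
  | _, _, ax _, _, _, _, _ => False
  | _, _, contrL p, B, D, S, P => hasOrL _ _ p B D S P
  | _, _, contrR p, B, D, S, P => hasOrL _ _ p B D S P
  | _, _, botR p, B, D, S, P => hasOrL _ _ p B D S P
  | _, _, andL p, B, D, S, P => hasOrL _ _ p B D S P
  | _, _, andR p q, B, D, S, P => hasOrL _ _ p B D S P ∨ hasOrL _ _ q B D S P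
  | _, _, @orL B' D' Γ' Δ' p q, B, D, S, P =>
      (B' = B ∧ D' = D ∧ Γ' = S ∧ Δ' = P) ∨ hasOrL _ _ p B D S P ∨ hasOrL _ _ q B D S P
  | _, _, orR1 p, B, D, S, P => hasOrL _ _ p B D S P
  | _, _, orR2 p, B, D, S, P => hasOrL _ _ p B D S P
  | _, _, impL p q, B, D, S, P => hasOrL _ _ p B D S P ∨ hasOrL _ _ q B D S P
  | _, _, impR p, B, D, S, P => hasOrL _ _ p B D S P
  | _, _, allL _ p, B, D, S, P => hasOrL _ _ p B D S P
  | _, _, exR _ p, B, D, S, P => hasOrL _ _ p B D S P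
  | _, _, exL _ _ p, B, D, S, P => hasOrL _ _ p B D S P
  | _, _, allR _ _ p, B, D, S, P => hasOrL _ _ p B D S P

/-- Every formula in `Δ` is atomic or ⊥. -/
def neutralM (Δ : Multiset Fm) : Prop := ∀ F ∈ Δ, F.neutral

/-- A uniform proof: an I-proof in which any sequent whose succedent contains
a non-atomic formula occurs only as the lower sequent of an inference rule
that introduces the top-level logical symbol of that formula. -/
def isUniform : ∀ (Γ Δ : Multiset Fm), CProof Γ Δ → Prop
  | _, _, @ax _ Δ _ => Multiset.card Δ = 1
  | _, _, @contrL _ _ Δ p => Multiset.card Δ = 1 ∧ neutralM Δ ∧ isUniform _ _ p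
  | _, _, @contrR B _ Δ p =>
      Multiset.card (B ::ₘ Δ) = 1 ∧ neutralM (B ::ₘ Δ) ∧ isUniform _ _ p
  | _, _, @botR D _ Δ p =>
      Multiset.card (D ::ₘ Δ) = 1 ∧ neutralM (D ::ₘ Δ) ∧ isUniform _ _ p
  | _, _, @andL _ _ _ Δ p => Multiset.card Δ = 1 ∧ neutralM Δ ∧ isUniform _ _ p
  | _, _, @andR B D _ Δ p q =>
      Multiset.card ((B.conj D) ::ₘ Δ) = 1 ∧ isUniform _ _ p ∧ isUniform _ _ q
  | _, _, @orL _ _ _ Δ p q =>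
      Multiset.card Δ = 1 ∧ neutralM Δ ∧ isUniform _ _ p ∧ isUniform _ _ q
  | _, _, @orR1 B D _ Δ p => Multiset.card ((B.disj D) ::ₘ Δ) = 1 ∧ isUniform _ _ p
  | _, _, @orR2 B D _ Δ p => Multiset.card ((B.disj D) ::ₘ Δ) = 1 ∧ isUniform _ _ p
  | _, _, @impL _ _ _ Δ Θ p q =>
      Multiset.card (Δ + Θ) = 1 ∧ neutralM (Δ + Θ) ∧ isUniform _ _ p ∧ isUniform _ _ q
  | _, _, @impR B D _ Δ p => Multiset.card ((B.imp D) ::ₘ Δ) = 1 ∧ isUniform _ _ p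
  | _, _, @allL _ _ Δ _ p => Multiset.card Δ = 1 ∧ neutralM Δ ∧ isUniform _ _ p
  | _, _, @exR B _ Δ _ p => Multiset.card ((Fm.ex B) ::ₘ Δ) = 1 ∧ isUniform _ _ p
  | _, _, @exL _ _ Δ _ _ p => Multiset.card Δ = 1 ∧ neutralM Δ ∧ isUniform _ _ p
  | _, _, @allR B _ Δ _ _ p => Multiset.card ((Fm.all B) ::ₘ Δ) = 1 ∧ isUniform _ _ p

end CProof

/-- Uniform provability: `Γ ⊢_O F`. -/
def UProv (Γ : Multiset Fm) (F : Fm) : Prop :=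
  ∃ p : CProof Γ ({F} : Multiset Fm), p.isUniform

/-- The ordering ⪰ measuring the strength of formulas as assumptions. -/
inductive Fm.ge : Fm → Fm → Prop
  | refl (F : Fm) : Fm.ge F F
  | imp {F A B : Fm} : Fm.ge F B → Fm.ge F (Fm.imp A B)
  | disjl {F A B : Fm} : Fm.ge F A → Fm.ge F (Fm.disj A B)
  | disjr {F A B : Fm} : Fm.ge F B → Fm.ge F (Fm.disj A B)
  | ex {F P : Fm} (c : ℕ) : Fm.ge F (P.inst (Tm.const c)) → Fm.ge F (Fm.ex P)

/-- `MsGe Γ₁ Γ₂`: there is an injective map κ from `Γ₂` into `Γ₁` with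
`κ(F) ⪰ F` for every `F ∈ Γ₂`. -/
def MsGe (Γ₁ Γ₂ : Multiset Fm) : Prop :=
  ∃ Γ' ≤ Γ₁, Multiset.Rel Fm.ge Γ' Γ₂

mutual
  /-- G-formulas: G ::= ⊤ | ⊥ | A | G∧G | G∨G | D⊃G | ∃x G. -/
  inductive GFm : Fm → Prop
    | top : GFm Fm.top
    | bot : GFm Fm.bot
    | atom {p : ℕ} {ts : List Tm} : GFm (Fm.atom p ts)
    | conj {a b : Fm} : GFm a → GFm b → GFm (Fm.conj a b)
    | disj {a b : Fm} : GFm a → GFm b → GFm (Fm.disj a b)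
    | imp {a b : Fm} : DFm a → GFm b → GFm (Fm.imp a b)
    | ex {a : Fm} : GFm a → GFm (Fm.ex a)

  /-- D-formulas: D ::= ⊤ | ⊥ | A | G⊃D | D∧D | D∨D | ∃x D | ∀x D. -/
  inductive DFm : Fm → Prop
    | top : DFm Fm.top
    | bot : DFm Fm.bot
    | atom {p : ℕ} {ts : List Tm} : DFm (Fm.atom p ts)
    | imp {a b : Fm} : GFm a → DFm b → DFm (Fm.imp a b)
    | conj {a b : Fm} : DFm a → DFm b → DFm (Fm.conj a b)
    | disj {a b : Fm} : DFm a → DFm b → DFm (Fm.disj a b)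
    | ex {a : Fm} : DFm a → DFm (Fm.ex a)
    | all {a : Fm} : DFm a → DFm (Fm.all a)
end
/-- I_G-proofs: derivations in the intuitionistic sequent calculus (single
succedent formula) augmented with the derived rules ∨-L_G and res_G, in which
the eigenvariable proviso on ∃-L and ∀-R also disallows constants in `G`. -/
inductive IGProof (G : Fm) : Multiset Fm → Fm → Type
  | ax {Γ : Multiset Fm} {F : Fm} (h : AxSeq Γ ({F} : Multiset Fm)) : IGProof G Γ F
  | contrL {B : Fm} {Γ : Multiset Fm} {F : Fm} (p : IGProof G (B ::ₘ B ::ₘ Γ) F) :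
      IGProof G (B ::ₘ Γ) F
  | botR {Γ : Multiset Fm} {F : Fm} (p : IGProof G Γ Fm.bot) : IGProof G Γ F
  | andL {B D : Fm} {Γ : Multiset Fm} {F : Fm}
      (p : IGProof G (B ::ₘ D ::ₘ (B.conj D) ::ₘ Γ) F) : IGProof G ((B.conj D) ::ₘ Γ) F
  | andR {B D : Fm} {Γ : Multiset Fm} (p : IGProof G Γ B) (q : IGProof G Γ D) :
      IGProof G Γ (B.conj D)
  | orL {B D : Fm} {Γ : Multiset Fm} {F : Fm} (p : IGProof G (B ::ₘ Γ) F)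
      (q : IGProof G (D ::ₘ Γ) F) : IGProof G ((B.disj D) ::ₘ Γ) F
  | orR1 {B D : Fm} {Γ : Multiset Fm} (p : IGProof G Γ B) : IGProof G Γ (B.disj D)
  | orR2 {B D : Fm} {Γ : Multiset Fm} (p : IGProof G Γ D) : IGProof G Γ (B.disj D)
  | impL {B D : Fm} {Γ : Multiset Fm} {F : Fm} (p : IGProof G ((B.imp D) ::ₘ Γ) B)
      (q : IGProof G (D ::ₘ Γ) F) : IGProof G ((B.imp D) ::ₘ Γ) F
  | impR {B D : Fm} {Γ : Multiset Fm} (p : IGProof G (B ::ₘ Γ) D) : IGProof G Γ (B.imp D)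
  | allL {B : Fm} {Γ : Multiset Fm} {F : Fm} (t : Tm)
      (p : IGProof G ((B.inst t) ::ₘ (Fm.all B) ::ₘ Γ) F) : IGProof G ((Fm.all B) ::ₘ Γ) F
  | exR {B : Fm} {Γ : Multiset Fm} (t : Tm) (p : IGProof G Γ (B.inst t)) :
      IGProof G Γ (Fm.ex B)
  | exL {B : Fm} {Γ : Multiset Fm} {F : Fm} (c : ℕ)
      (hc : FreshSeq c ((Fm.ex B) ::ₘ Γ) ({F} : Multiset Fm)) (hG : ¬ G.constIn c)
      (p : IGProof G ((B.inst (Tm.const c)) ::ₘ Γ) F) : IGProof G ((Fm.ex B) ::ₘ Γ) F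
  | allR {B : Fm} {Γ : Multiset Fm} (c : ℕ)
      (hc : FreshSeq c Γ ({Fm.all B} : Multiset Fm)) (hG : ¬ G.constIn c)
      (p : IGProof G Γ (B.inst (Tm.const c))) : IGProof G Γ (Fm.all B)
  | orLG {B D : Fm} {Γ : Multiset Fm} {F : Fm} (p : IGProof G (B ::ₘ Γ) F)
      (q : IGProof G (D ::ₘ Γ) G) : IGProof G ((B.disj D) ::ₘ Γ) F
  | resG {Γ : Multiset Fm} {F : Fm} (p : IGProof G Γ G) : IGProof G Γ F

namespace IGProof

/-- The number of occurrences of the ∨-L rule in an I_G-proof. -/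
def orLCount : ∀ (G : Fm) (Γ : Multiset Fm) (F : Fm), IGProof G Γ F → ℕ
  | _, _, _, ax _ => 0
  | _, _, _, contrL p => orLCount _ _ _ p
  | _, _, _, botR p => orLCount _ _ _ p
  | _, _, _, andL p => orLCount _ _ _ p
  | _, _, _, andR p q => orLCount _ _ _ p + orLCount _ _ _ q
  | _, _, _, orL p q => orLCount _ _ _ p + orLCount _ _ _ q + 1
  | _, _, _, orR1 p => orLCount _ _ _ p
  | _, _, _, orR2 p => orLCount _ _ _ p
  | _, _, _, impL p q => orLCount _ _ _ p + orLCount _ _ _ q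
  | _, _, _, impR p => orLCount _ _ _ p
  | _, _, _, allL _ p => orLCount _ _ _ p
  | _, _, _, exR _ p => orLCount _ _ _ p
  | _, _, _, exL _ _ _ p => orLCount _ _ _ p
  | _, _, _, allR _ _ _ p => orLCount _ _ _ p
  | _, _, _, orLG p q => orLCount _ _ _ p + orLCount _ _ _ q
  | _, _, _, resG p => orLCount _ _ _ p

/-- The height of an I_G-proof: the length of its longest branch. -/
def height : ∀ (G : Fm) (Γ : Multiset Fm) (F : Fm), IGProof G Γ F → ℕ
  | _, _, _, ax _ => 1
  | _, _, _, contrL p => height _ _ _ p + 1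
  | _, _, _, botR p => height _ _ _ p + 1
  | _, _, _, andL p => height _ _ _ p + 1
  | _, _, _, andR p q => max (height _ _ _ p) (height _ _ _ q) + 1
  | _, _, _, orL p q => max (height _ _ _ p) (height _ _ _ q) + 1
  | _, _, _, orR1 p => height _ _ _ p + 1
  | _, _, _, orR2 p => height _ _ _ p + 1
  | _, _, _, impL p q => max (height _ _ _ p) (height _ _ _ q) + 1
  | _, _, _, impR p => height _ _ _ p + 1
  | _, _, _, allL _ p => height _ _ _ p + 1
  | _, _, _, exR _ p => height _ _ _ p + 1
  | _, _, _, exL _ _ _ p => height _ _ _ p + 1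
  | _, _, _, allR _ _ _ p => height _ _ _ p + 1
  | _, _, _, orLG p q => max (height _ _ _ p) (height _ _ _ q) + 1
  | _, _, _, resG p => height _ _ _ p + 1

/-- The number of sequents appearing in an I_G-proof. -/
def size : ∀ (G : Fm) (Γ : Multiset Fm) (F : Fm), IGProof G Γ F → ℕ
  | _, _, _, ax _ => 1
  | _, _, _, contrL p => size _ _ _ p + 1
  | _, _, _, botR p => size _ _ _ p + 1
  | _, _, _, andL p => size _ _ _ p + 1
  | _, _, _, andR p q => size _ _ _ p + size _ _ _ q + 1
  | _, _, _, orL p q => size _ _ _ p + size _ _ _ q + 1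
  | _, _, _, orR1 p => size _ _ _ p + 1
  | _, _, _, orR2 p => size _ _ _ p + 1
  | _, _, _, impL p q => size _ _ _ p + size _ _ _ q + 1
  | _, _, _, impR p => size _ _ _ p + 1
  | _, _, _, allL _ p => size _ _ _ p + 1
  | _, _, _, exR _ p => size _ _ _ p + 1
  | _, _, _, exL _ _ _ p => size _ _ _ p + 1
  | _, _, _, allR _ _ _ p => size _ _ _ p + 1
  | _, _, _, orLG p q => size _ _ _ p + size _ _ _ q + 1
  | _, _, _, resG p => size _ _ _ p + 1

/-- O_G-proofs: I_G-proofs containing no occurrence of the ∨-L rule, in which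
any sequent whose succedent contains a non-atomic formula occurs only as the
lower sequent of a rule introducing the top-level symbol of that formula. -/
def isOG : ∀ (G : Fm) (Γ : Multiset Fm) (F : Fm), IGProof G Γ F → Prop
  | _, _, _, ax _ => True
  | _, _, _, @contrL _ _ _ F p => F.neutral ∧ isOG _ _ _ p
  | _, _, _, @botR _ _ F p => F.neutral ∧ isOG _ _ _ p
  | _, _, _, @andL _ _ _ _ F p => F.neutral ∧ isOG _ _ _ p
  | _, _, _, andR p q => isOG _ _ _ p ∧ isOG _ _ _ q
  | _, _, _, orL _ _ => False
  | _, _, _, orR1 p => isOG _ _ _ p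
  | _, _, _, orR2 p => isOG _ _ _ p
  | _, _, _, @impL _ _ _ _ F p q => F.neutral ∧ isOG _ _ _ p ∧ isOG _ _ _ q
  | _, _, _, impR p => isOG _ _ _ p
  | _, _, _, @allL _ _ _ F _ p => F.neutral ∧ isOG _ _ _ p
  | _, _, _, exR _ p => isOG _ _ _ p
  | _, _, _, @exL _ _ _ F _ _ _ p => F.neutral ∧ isOG _ _ _ p
  | _, _, _, allR _ _ _ p => isOG _ _ _ p
  | _, _, _, @orLG _ _ _ _ F p q => F.neutral ∧ isOG _ _ _ p ∧ isOG _ _ _ q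
  | _, _, _, @resG _ _ F p => F.neutral ∧ isOG _ _ _ p

/-- `hasOrL p B D S F` holds when an ∨-L rule with upper sequents `B,S → F`
and `D,S → F` and lower sequent `B∨D,S → F` occurs in the I_G-proof `p`. -/
def hasOrL : ∀ (G : Fm) (Γ : Multiset Fm) (W : Fm), IGProof G Γ W →
    Fm → Fm → Multiset Fm → Fm → Prop
  | _, _, _, ax _, _, _, _, _ => False
  | _, _, _, contrL p, B, D, S, F => hasOrL _ _ _ p B D S F
  | _, _, _, botR p, B, D, S, F => hasOrL _ _ _ p B D S F
  | _, _, _, andL p, B, D, S, F => hasOrL _ _ _ p B D S F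
  | _, _, _, andR p q, B, D, S, F => hasOrL _ _ _ p B D S F ∨ hasOrL _ _ _ q B D S F
  | _, _, _, @orL _ B' D' Γ' F' p q, B, D, S, F =>
      (B' = B ∧ D' = D ∧ Γ' = S ∧ F' = F) ∨ hasOrL _ _ _ p B D S F ∨ hasOrL _ _ _ q B D S F
  | _, _, _, orR1 p, B, D, S, F => hasOrL _ _ _ p B D S F
  | _, _, _, orR2 p, B, D, S, F => hasOrL _ _ _ p B D S F
  | _, _, _, impL p q, B, D, S, F => hasOrL _ _ _ p B D S F ∨ hasOrL _ _ _ q B D S F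
  | _, _, _, impR p, B, D, S, F => hasOrL _ _ _ p B D S F
  | _, _, _, allL _ p, B, D, S, F => hasOrL _ _ _ p B D S F
  | _, _, _, exR _ p, B, D, S, F => hasOrL _ _ _ p B D S F
  | _, _, _, exL _ _ _ p, B, D, S, F => hasOrL _ _ _ p B D S F
  | _, _, _, allR _ _ _ p, B, D, S, F => hasOrL _ _ _ p B D S F
  | _, _, _, orLG p q, B, D, S, F => hasOrL _ _ _ p B D S F ∨ hasOrL _ _ _ q B D S F
  | _, _, _, resG p, B, D, S, F => hasOrL _ _ _ p B D S F

end IGProof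

/-- In the simplified syntax, `A` ranges over atomic formulas together with
⊤ and ⊥. -/
def AtFm (F : Fm) : Prop := F.isAtom ∨ F = Fm.top ∨ F = Fm.bot

/-- `disjs A [B₁,…,Bₙ]` is the disjunction `A ∨ B₁ ∨ … ∨ Bₙ`. -/
def disjs (A : Fm) : List Fm → Fm
  | [] => A
  | B :: l => Fm.disj A (disjs B l)

mutual
  /-- Goals in the simplified syntax: G ::= A | G∧G | G∨G | D⊃G | ∃x G. -/
  inductive Goal : Fm → Prop
    | atm {A : Fm} : AtFm A → Goal A
    | conj {a b : Fm} : Goal a → Goal b → Goal (Fm.conj a b)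
    | disj {a b : Fm} : Goal a → Goal b → Goal (Fm.disj a b)
    | imp {a b : Fm} : PCl a → Goal b → Goal (Fm.imp a b)
    | ex {a : Fm} : Goal a → Goal (Fm.ex a)

  /-- Program clauses in the simplified syntax:
  D ::= (A∨…∨A) | G⊃(A∨…∨A) | ∀x D. -/
  inductive PCl : Fm → Prop
    | head {A : Fm} {l : List Fm} : AtFm A → (∀ B ∈ l, AtFm B) → PCl (disjs A l)
    | impHead {g A : Fm} {l : List Fm} : Goal g → AtFm A → (∀ B ∈ l, AtFm B) →
        PCl (Fm.imp g (disjs A l))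
    | all {d : Fm} : PCl d → PCl (Fm.all d)
end

/-- The instances `[D]` of a program clause `D`, as pairs whose first
component is `∅` (`none`) or `{G}` (`some G`) and whose second component is
the collection of head atoms. -/
inductive ClInst : Fm → Option Fm → Multiset Fm → Prop
  | head {A : Fm} {l : List Fm} : AtFm A → (∀ B ∈ l, AtFm B) →
      ClInst (disjs A l) none (A ::ₘ (l : Multiset Fm))
  | impHead {g A : Fm} {l : List Fm} : Goal g → AtFm A → (∀ B ∈ l, AtFm B) →
      ClInst (Fm.imp g (disjs A l)) (some g) (A ::ₘ (l : Multiset Fm))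
  | all {d : Fm} {o : Option Fm} {m : Multiset Fm} (t : Tm) :
      ClInst (d.inst t) o m → ClInst (Fm.all d) o m

/-- `[Γ]`: the instances of the clauses in `Γ`. -/
def GammaInst (Γ : Multiset Fm) (o : Option Fm) (m : Multiset Fm) : Prop :=
  ∃ D ∈ Γ, ClInst D o m

/-- The reduced proof system relative to the goal `G`: axioms `Δ → ⊤`, the
rules RESTART, ATOMIC and BACKCHAIN relativized to `G`, and ∨-R, ∧-R, ⊃-R
and ∃-R. -/
inductive RP (G : Fm) : Multiset Fm → Fm → Prop
  | topAx {Γ : Multiset Fm} : RP G Γ Fm.top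
  | restart {Γ : Multiset Fm} {C : Fm} (hC : C.isAtom ∨ C = Fm.bot) (p : RP G Γ G) :
      RP G Γ C
  | atomic {Γ : Multiset Fm} {C : Fm} {m : Multiset Fm} (hC : C.isAtom ∨ C = Fm.bot)
      (h : GammaInst Γ none (C ::ₘ m) ∨ GammaInst Γ none (Fm.bot ::ₘ m))
      (ps : ∀ A ∈ m, RP G (A ::ₘ Γ) G) : RP G Γ C
  | backchain {Γ : Multiset Fm} {C G' : Fm} {m : Multiset Fm}
      (hC : C.isAtom ∨ C = Fm.bot)
      (h : GammaInst Γ (some G') (C ::ₘ m) ∨ GammaInst Γ (some G') (Fm.bot ::ₘ m))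
      (p : RP G Γ G') (ps : ∀ A ∈ m, RP G (A ::ₘ Γ) G) : RP G Γ C
  | orR1 {Γ : Multiset Fm} {B D : Fm} (p : RP G Γ B) : RP G Γ (B.disj D)
  | orR2 {Γ : Multiset Fm} {B D : Fm} (p : RP G Γ D) : RP G Γ (B.disj D)
  | andR {Γ : Multiset Fm} {B D : Fm} (p : RP G Γ B) (q : RP G Γ D) : RP G Γ (B.conj D)
  | impR {Γ : Multiset Fm} {B D : Fm} (p : RP G (B ::ₘ Γ) D) : RP G Γ (B.imp D)
  | exR {Γ : Multiset Fm} {B : Fm} (t : Tm) (p : RP G Γ (B.inst t)) : RP G Γ (Fm.ex B)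

/- ===================== Auxiliary development ===================== -/

namespace S7

open Fm

/-! ### Renaming of constants -/

def renT (c c' : ℕ) : Tm → Tm
  | Tm.var n => Tm.var n
  | Tm.const d => Tm.const (if d = c then c' else d)

def renF (c c' : ℕ) : Fm → Fm
  | Fm.top => Fm.top
  | Fm.bot => Fm.bot
  | Fm.atom p ts => Fm.atom p (ts.map (renT c c'))
  | Fm.conj a b => Fm.conj (renF c c' a) (renF c c' b)
  | Fm.disj a b => Fm.disj (renF c c' a) (renF c c' b)
  | Fm.imp a b => Fm.imp (renF c c' a) (renF c c' b)
  | Fm.ex a => Fm.ex (renF c c' a)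
  | Fm.all a => Fm.all (renF c c' a)

lemma renT_subst (c c' k : ℕ) (u t : Tm) :
    renT c c' (Tm.subst k u t) = Tm.subst k (renT c c' u) (renT c c' t) := by
  cases t with
  | var n => by_cases h : n = k <;> simp [Tm.subst, renT, h]
  | const d => simp [Tm.subst, renT]

lemma renF_subst (c c' : ℕ) (u : Tm) : ∀ (a : Fm) (k : ℕ),
    renF c c' (Fm.subst k u a) = Fm.subst k (renT c c' u) (renF c c' a) := by
  intro a
  induction a with
  | top => intro k; rfl
  | bot => intro k; rfl
  | atom p ts =>
      intro k
      simp [Fm.subst, renF, List.map_map, Function.comp_def, renT_subst]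
  | conj a b iha ihb => intro k; simp [Fm.subst, renF, iha, ihb]
  | disj a b iha ihb => intro k; simp [Fm.subst, renF, iha, ihb]
  | imp a b iha ihb => intro k; simp [Fm.subst, renF, iha, ihb]
  | ex a iha => intro k; simp [Fm.subst, renF, iha]
  | all a iha => intro k; simp [Fm.subst, renF, iha]

lemma renF_inst (c c' : ℕ) (u : Tm) (a : Fm) :
    renF c c' (Fm.inst u a) = Fm.inst (renT c c' u) (renF c c' a) :=
  renF_subst c c' u a 0

lemma renT_id {c : ℕ} (c' : ℕ) {t : Tm} (h : ¬ t.constIn c) : renT c c' t = t := by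
  cases t with
  | var n => rfl
  | const d =>
      simp [Tm.constIn] at h
      simp [renT, h]

lemma renF_id {c : ℕ} (c' : ℕ) : ∀ {a : Fm}, ¬ a.constIn c → renF c c' a = a := by
  intro a
  induction a with
  | top => intro _; rfl
  | bot => intro _; rfl
  | atom p ts =>
      intro h
      simp only [Fm.constIn] at h
      push_neg at h
      simp only [renF, Fm.atom.injEq, true_and]
      have hpt : ∀ t ∈ ts, renT c c' t = id t := fun t ht => renT_id c' (h t ht)
      rw [List.map_congr_left hpt, List.map_id]
  | conj a b iha ihb =>
      intro h; simp only [Fm.constIn] at h; push_neg at h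
      simp [renF, iha h.1, ihb h.2]
  | disj a b iha ihb =>
      intro h; simp only [Fm.constIn] at h; push_neg at h
      simp [renF, iha h.1, ihb h.2]
  | imp a b iha ihb =>
      intro h; simp only [Fm.constIn] at h; push_neg at h
      simp [renF, iha h.1, ihb h.2]
  | ex a iha => intro h; simp only [Fm.constIn] at h; simp [renF, iha h]
  | all a iha => intro h; simp only [Fm.constIn] at h; simp [renF, iha h]

lemma constIn_renT {d c c' : ℕ} {t : Tm} (h : (renT c c' t).constIn d) :
    d = c' ∨ t.constIn d := by
  cases t with
  | var n => simp [renT, Tm.constIn] at h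
  | const e =>
      simp only [renT, Tm.constIn] at h ⊢
      by_cases he : e = c
      · simp [he] at h; exact Or.inl h.symm
      · simp [he] at h; exact Or.inr h

lemma constIn_renF {d c c' : ℕ} : ∀ {a : Fm}, (renF c c' a).constIn d →
    d = c' ∨ a.constIn d := by
  intro a
  induction a with
  | top => intro h; exact absurd h (by simp [renF, Fm.constIn])
  | bot => intro h; exact absurd h (by simp [renF, Fm.constIn])
  | atom p ts =>
      intro h
      simp only [renF, Fm.constIn, List.mem_map] at h
      obtain ⟨t, ⟨t0, ht0, rfl⟩, hc⟩ := h
      rcases constIn_renT hc with h | h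
      · exact Or.inl h
      · exact Or.inr ⟨t0, ht0, h⟩
  | conj a b iha ihb =>
      intro h
      rcases h with h | h
      · rcases iha h with h | h; exact Or.inl h; exact Or.inr (Or.inl h)
      · rcases ihb h with h | h; exact Or.inl h; exact Or.inr (Or.inr h)
  | disj a b iha ihb =>
      intro h
      rcases h with h | h
      · rcases iha h with h | h; exact Or.inl h; exact Or.inr (Or.inl h)
      · rcases ihb h with h | h; exact Or.inl h; exact Or.inr (Or.inr h)
  | imp a b iha ihb =>
      intro h
      rcases h with h | h
      · rcases iha h with h | h; exact Or.inl h; exact Or.inr (Or.inl h)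
      · rcases ihb h with h | h; exact Or.inl h; exact Or.inr (Or.inr h)
  | ex a iha => intro h; exact iha h
  | all a iha => intro h; exact iha h

/-! ### Bounds on constants -/

def mcT : Tm → ℕ
  | Tm.var _ => 0
  | Tm.const d => d + 1

def mcF : Fm → ℕ
  | Fm.top => 0
  | Fm.bot => 0
  | Fm.atom _ ts => (ts.map mcT).foldr max 0
  | Fm.conj a b => max (mcF a) (mcF b)
  | Fm.disj a b => max (mcF a) (mcF b)
  | Fm.imp a b => max (mcF a) (mcF b)
  | Fm.ex a => mcF a
  | Fm.all a => mcF a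

lemma mcT_lt {c : ℕ} {t : Tm} (h : t.constIn c) : c < mcT t := by
  cases t with
  | var n => exact absurd h (by simp [Tm.constIn])
  | const d => simp [Tm.constIn] at h; simp [mcT, h]

lemma mcF_lt {c : ℕ} : ∀ {a : Fm}, a.constIn c → c < mcF a := by
  intro a
  induction a with
  | top => intro h; exact absurd h (by simp [Fm.constIn])
  | bot => intro h; exact absurd h (by simp [Fm.constIn])
  | atom p ts =>
      intro h
      obtain ⟨t, ht, hc⟩ := h
      have h1 : mcT t ≤ (ts.map mcT).foldr max 0 := by
        have : mcT t ∈ ts.map mcT := List.mem_map.mpr ⟨t, ht, rfl⟩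
        exact List.le_max_of_le (l := ts.map mcT) this (le_refl _) |>.trans (le_refl _)
      exact lt_of_lt_of_le (mcT_lt hc) h1
  | conj a b iha ihb =>
      intro h; rcases h with h | h
      · exact lt_of_lt_of_le (iha h) (le_max_left _ _)
      · exact lt_of_lt_of_le (ihb h) (le_max_right _ _)
  | disj a b iha ihb =>
      intro h; rcases h with h | h
      · exact lt_of_lt_of_le (iha h) (le_max_left _ _)
      · exact lt_of_lt_of_le (ihb h) (le_max_right _ _)
  | imp a b iha ihb =>
      intro h; rcases h with h | h
      · exact lt_of_lt_of_le (iha h) (le_max_left _ _)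
      · exact lt_of_lt_of_le (ihb h) (le_max_right _ _)
  | ex a iha => exact iha
  | all a iha => exact iha

noncomputable def mcM (Γ : Multiset Fm) : ℕ := (Γ.map mcF).sum

lemma mcF_le_mcM {F : Fm} {Γ : Multiset Fm} (h : F ∈ Γ) : mcF F ≤ mcM Γ := by
  have : mcF F ∈ Γ.map mcF := Multiset.mem_map.mpr ⟨F, h, rfl⟩
  exact Multiset.single_le_sum (by intro x _; exact Nat.zero_le x) _ this

lemma not_constIn_of_le {c : ℕ} {F : Fm} (h : mcF F ≤ c) : ¬ F.constIn c := by
  intro hc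
  exact absurd (mcF_lt hc) (by omega)

lemma not_constIn_mem_of_le {c : ℕ} {Γ : Multiset Fm} (h : mcM Γ ≤ c) :
    ∀ F ∈ Γ, ¬ F.constIn c := by
  intro F hF
  exact not_constIn_of_le ((mcF_le_mcM hF).trans h)

end S7
deriving instance DecidableEq for Tm
deriving instance DecidableEq for Fm

namespace S7

/-! ### The `ge` ordering -/

lemma ge_trans : ∀ {X Y Z : Fm}, Fm.ge X Y → Fm.ge Y Z → Fm.ge X Z := by
  intro X Y Z h1 h2
  induction h2 with
  | refl => exact h1
  | imp _ ih => exact Fm.ge.imp ih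
  | disjl _ ih => exact Fm.ge.disjl ih
  | disjr _ ih => exact Fm.ge.disjr ih
  | ex c _ ih => exact Fm.ge.ex c ih

lemma ge_bot_inv {X : Fm} (h : Fm.ge X Fm.bot) : X = Fm.bot := by
  cases h; rfl

lemma ge_top_inv {X : Fm} (h : Fm.ge X Fm.top) : X = Fm.top := by
  cases h; rfl

lemma ge_atom_inv {X : Fm} {p ts} (h : Fm.ge X (Fm.atom p ts)) : X = Fm.atom p ts := by
  cases h; rfl

lemma ge_conj_inv {X A B : Fm} (h : Fm.ge X (Fm.conj A B)) : X = Fm.conj A B := by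
  cases h; rfl

lemma ge_all_inv {X A : Fm} (h : Fm.ge X (Fm.all A)) : X = Fm.all A := by
  cases h; rfl

lemma ge_imp_inv {X A B : Fm} (h : Fm.ge X (Fm.imp A B)) :
    X = Fm.imp A B ∨ Fm.ge X B := by
  cases h with
  | refl => exact Or.inl rfl
  | imp h => exact Or.inr h

lemma ge_disj_inv {X A B : Fm} (h : Fm.ge X (Fm.disj A B)) :
    X = Fm.disj A B ∨ Fm.ge X A ∨ Fm.ge X B := by
  cases h with
  | refl => exact Or.inl rfl
  | disjl h => exact Or.inr (Or.inl h)
  | disjr h => exact Or.inr (Or.inr h)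

lemma ge_ex_inv {X A : Fm} (h : Fm.ge X (Fm.ex A)) :
    X = Fm.ex A ∨ ∃ c : ℕ, Fm.ge X (A.inst (Tm.const c)) := by
  cases h with
  | refl => exact Or.inl rfl
  | ex c h => exact Or.inr ⟨c, h⟩

/-! ### Multiset relation lemmas -/

lemma rel_refl_ge : ∀ (s : Multiset Fm), Multiset.Rel Fm.ge s s := by
  intro s
  induction s using Multiset.induction with
  | empty => exact Multiset.Rel.zero
  | cons a s ih => exact Multiset.Rel.cons (Fm.ge.refl a) ih

lemma rel_mem_right {r : Fm → Fm → Prop} {as bs : Multiset Fm} {b : Fm}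
    (h : Multiset.Rel r as bs) (hb : b ∈ bs) : ∃ a ∈ as, r a b := by
  rw [← Multiset.cons_erase hb] at h
  obtain ⟨a, as', hab, _, rfl⟩ := Multiset.rel_cons_right.1 h
  exact ⟨a, Multiset.mem_cons_self a as', hab⟩

lemma rel_le_right {r : Fm → Fm → Prop} : ∀ (bs' : Multiset Fm) {as bs : Multiset Fm},
    Multiset.Rel r as bs → bs' ≤ bs → ∃ as' ≤ as, Multiset.Rel r as' bs' := by
  intro bs'
  induction bs' using Multiset.induction with
  | empty => intro as bs _ _; exact ⟨0, Multiset.zero_le as, Multiset.Rel.zero⟩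
  | cons b s ih =>
      intro as bs hrel hle
      have hb : b ∈ bs := Multiset.mem_of_le hle (Multiset.mem_cons_self b s)
      rw [← Multiset.cons_erase hb] at hrel hle
      obtain ⟨a, as0, hab, hrel0, rfl⟩ := Multiset.rel_cons_right.1 hrel
      have hs : s ≤ bs.erase b := (Multiset.cons_le_cons_iff b).1 hle
      obtain ⟨as', has', hrel'⟩ := ih hrel0 hs
      exact ⟨a ::ₘ as', Multiset.cons_le_cons a has', Multiset.Rel.cons hab hrel'⟩

end S7
namespace S7

/-! ### MsGe lemmas -/

lemma msge_refl (s : Multiset Fm) : MsGe s s := ⟨s, le_refl s, rel_refl_ge s⟩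

lemma msge_cons_both {Γ₁ Γ₂ : Multiset Fm} (B : Fm) (h : MsGe Γ₁ Γ₂) :
    MsGe (B ::ₘ Γ₁) (B ::ₘ Γ₂) := by
  obtain ⟨Γ', hle, hrel⟩ := h
  exact ⟨B ::ₘ Γ', Multiset.cons_le_cons B hle, Multiset.Rel.cons (Fm.ge.refl B) hrel⟩

lemma msge_cons_ge {Γ₁ Γ₂ : Multiset Fm} {X B : Fm} (hg : Fm.ge X B) (h : MsGe Γ₁ Γ₂) :
    MsGe (X ::ₘ Γ₁) (B ::ₘ Γ₂) := by
  obtain ⟨Γ', hle, hrel⟩ := h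
  exact ⟨X ::ₘ Γ', Multiset.cons_le_cons X hle, Multiset.Rel.cons hg hrel⟩

lemma msge_cons_left (B : Fm) (Γ : Multiset Fm) : MsGe (B ::ₘ Γ) Γ :=
  ⟨Γ, Multiset.le_cons_self Γ B, rel_refl_ge Γ⟩

lemma rel_ge_trans : ∀ (cs : Multiset Fm) {as bs : Multiset Fm},
    Multiset.Rel Fm.ge as bs → Multiset.Rel Fm.ge bs cs → Multiset.Rel Fm.ge as cs := by
  intro cs
  induction cs using Multiset.induction with
  | empty =>
      intro as bs h1 h2
      rw [Multiset.rel_zero_right] at h2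
      subst h2
      rwa [Multiset.rel_zero_right] at h1 ⊢
  | cons b s ih =>
      intro as bs h1 h2
      obtain ⟨y, ys, hyb, hrel2, rfl⟩ := Multiset.rel_cons_right.1 h2
      obtain ⟨x, xs, hxy, hrel1, rfl⟩ := Multiset.rel_cons_right.1 h1
      exact Multiset.Rel.cons (ge_trans hxy hyb) (ih hrel1 hrel2)

lemma msge_trans {Γ₁ Γ₂ Γ₃ : Multiset Fm} (h12 : MsGe Γ₁ Γ₂) (h23 : MsGe Γ₂ Γ₃) :
    MsGe Γ₁ Γ₃ := by
  obtain ⟨Γ', hle', hrel'⟩ := h12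
  obtain ⟨Γ'', hle'', hrel''⟩ := h23
  obtain ⟨Γ₀, hle₀, hrel₀⟩ := rel_le_right Γ'' hrel' hle''
  exact ⟨Γ₀, hle₀.trans hle', rel_ge_trans Γ₃ hrel₀ hrel''⟩

lemma msge_cons_right {Γ₁ Γ₂ : Multiset Fm} {B : Fm} (h : MsGe Γ₁ (B ::ₘ Γ₂)) :
    ∃ X Γ₁', Γ₁ = X ::ₘ Γ₁' ∧ Fm.ge X B ∧ MsGe Γ₁' Γ₂ := by
  obtain ⟨Γ', hle, hrel⟩ := h
  obtain ⟨X, Γ'', hXB, hrel', rfl⟩ := Multiset.rel_cons_right.1 hrel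
  have hX : X ∈ Γ₁ := Multiset.mem_of_le hle (Multiset.mem_cons_self X Γ'')
  refine ⟨X, Γ₁.erase X, (Multiset.cons_erase hX).symm, hXB, ?_⟩
  refine ⟨Γ'', ?_, hrel'⟩
  have := hle
  rw [← Multiset.cons_erase hX] at this
  exact (Multiset.cons_le_cons_iff X).1 this

lemma msge_mem_right {Γ₁ Γ₂ : Multiset Fm} {B : Fm} (h : MsGe Γ₁ Γ₂) (hB : B ∈ Γ₂) :
    ∃ X ∈ Γ₁, Fm.ge X B := by
  obtain ⟨Γ', hle, hrel⟩ := h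
  obtain ⟨X, hX, hg⟩ := rel_mem_right hrel hB
  exact ⟨X, Multiset.mem_of_le hle hX, hg⟩

/-! ### Fragment closure lemmas -/

lemma frag_subst : ∀ (a : Fm) (k : ℕ) (u : Tm),
    (GFm a → GFm (a.subst k u)) ∧ (DFm a → DFm (a.subst k u)) := by
  intro a
  induction a with
  | top => intro k u; exact ⟨fun _ => GFm.top, fun _ => DFm.top⟩
  | bot => intro k u; exact ⟨fun _ => GFm.bot, fun _ => DFm.bot⟩
  | atom p ts => intro k u; exact ⟨fun _ => GFm.atom, fun _ => DFm.atom⟩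
  | conj a b iha ihb =>
      intro k u
      constructor
      · intro h; cases h with
        | conj h1 h2 => exact GFm.conj ((iha k u).1 h1) ((ihb k u).1 h2)
      · intro h; cases h with
        | conj h1 h2 => exact DFm.conj ((iha k u).2 h1) ((ihb k u).2 h2)
  | disj a b iha ihb =>
      intro k u
      constructor
      · intro h; cases h with
        | disj h1 h2 => exact GFm.disj ((iha k u).1 h1) ((ihb k u).1 h2)
      · intro h; cases h with
        | disj h1 h2 => exact DFm.disj ((iha k u).2 h1) ((ihb k u).2 h2)
  | imp a b iha ihb =>
      intro k u
      constructor
      · intro h; cases h with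
        | imp h1 h2 => exact GFm.imp ((iha k u).2 h1) ((ihb k u).1 h2)
      · intro h; cases h with
        | imp h1 h2 => exact DFm.imp ((iha k u).1 h1) ((ihb k u).2 h2)
  | ex a iha =>
      intro k u
      constructor
      · intro h; cases h with
        | ex h1 => exact GFm.ex ((iha (k+1) u).1 h1)
      · intro h; cases h with
        | ex h1 => exact DFm.ex ((iha (k+1) u).2 h1)
  | all a iha =>
      intro k u
      constructor
      · intro h; cases h
      · intro h; cases h with
        | all h1 => exact DFm.all ((iha (k+1) u).2 h1)

lemma GFm_inst {a : Fm} (t : Tm) (h : GFm a) : GFm (a.inst t) := (frag_subst a 0 t).1 h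
lemma DFm_inst {a : Fm} (t : Tm) (h : DFm a) : DFm (a.inst t) := (frag_subst a 0 t).2 h

lemma GFm_imp_inv {A B : Fm} (h : GFm (Fm.imp A B)) : DFm A ∧ GFm B := by
  cases h with | imp h1 h2 => exact ⟨h1, h2⟩
lemma GFm_conj_inv {A B : Fm} (h : GFm (Fm.conj A B)) : GFm A ∧ GFm B := by
  cases h with | conj h1 h2 => exact ⟨h1, h2⟩
lemma GFm_disj_inv {A B : Fm} (h : GFm (Fm.disj A B)) : GFm A ∧ GFm B := by
  cases h with | disj h1 h2 => exact ⟨h1, h2⟩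
lemma GFm_ex_inv {A : Fm} (h : GFm (Fm.ex A)) : GFm A := by
  cases h with | ex h1 => exact h1
lemma GFm_all_inv {A : Fm} (h : GFm (Fm.all A)) : False := by cases h

lemma DFm_imp_inv {A B : Fm} (h : DFm (Fm.imp A B)) : GFm A ∧ DFm B := by
  cases h with | imp h1 h2 => exact ⟨h1, h2⟩
lemma DFm_conj_inv {A B : Fm} (h : DFm (Fm.conj A B)) : DFm A ∧ DFm B := by
  cases h with | conj h1 h2 => exact ⟨h1, h2⟩
lemma DFm_disj_inv {A B : Fm} (h : DFm (Fm.disj A B)) : DFm A ∧ DFm B := by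
  cases h with | disj h1 h2 => exact ⟨h1, h2⟩
lemma DFm_ex_inv {A : Fm} (h : DFm (Fm.ex A)) : DFm A := by
  cases h with | ex h1 => exact h1
lemma DFm_all_inv {A : Fm} (h : DFm (Fm.all A)) : DFm A := by
  cases h with | all h1 => exact h1

end S7
namespace S7

/-! ### Size of C-proofs -/

def csize : ∀ {Γ Δ : Multiset Fm}, CProof Γ Δ → ℕ
  | _, _, CProof.ax _ => 1
  | _, _, CProof.contrL p => csize p + 1
  | _, _, CProof.contrR p => csize p + 1
  | _, _, CProof.botR p => csize p + 1
  | _, _, CProof.andL p => csize p + 1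
  | _, _, CProof.andR p q => csize p + csize q + 1
  | _, _, CProof.orL p q => csize p + csize q + 1
  | _, _, CProof.orR1 p => csize p + 1
  | _, _, CProof.orR2 p => csize p + 1
  | _, _, CProof.impL p q => csize p + csize q + 1
  | _, _, CProof.impR p => csize p + 1
  | _, _, CProof.allL _ p => csize p + 1
  | _, _, CProof.exR _ p => csize p + 1
  | _, _, CProof.exL _ _ p => csize p + 1
  | _, _, CProof.allR _ _ p => csize p + 1

def ccast {Γ Γ' Δ Δ' : Multiset Fm} (hΓ : Γ = Γ') (hΔ : Δ = Δ') (p : CProof Γ Δ) :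
    CProof Γ' Δ' := hΓ ▸ hΔ ▸ p

lemma ccast_isI {Γ Γ' Δ Δ' : Multiset Fm} (hΓ : Γ = Γ') (hΔ : Δ = Δ') (p : CProof Γ Δ) :
    (ccast hΓ hΔ p).isI ↔ p.isI := by subst hΓ; subst hΔ; rfl

lemma ccast_csize {Γ Γ' Δ Δ' : Multiset Fm} (hΓ : Γ = Γ') (hΔ : Δ = Δ') (p : CProof Γ Δ) :
    csize (ccast hΓ hΔ p) = csize p := by subst hΓ; subst hΔ; rfl

lemma csize_pos : ∀ {Γ Δ : Multiset Fm} (p : CProof Γ Δ), 1 ≤ csize p := by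
  intro Γ Δ p
  cases p <;> simp [csize]

/-- No sequent with an empty succedent is provable. -/
lemma succ_ne_zero : ∀ {Γ Δ : Multiset Fm}, CProof Γ Δ → Δ ≠ 0 := by
  intro Γ Δ p
  induction p with
  | ax h =>
      rcases h with h | ⟨A, _, _, hA⟩
      · exact fun h0 => absurd (h0 ▸ h) (Multiset.notMem_zero _)
      · exact fun h0 => absurd (h0 ▸ hA) (Multiset.notMem_zero _)
  | contrL p ih => exact ih
  | contrR p ih => exact Multiset.cons_ne_zero
  | botR p ih => exact Multiset.cons_ne_zero
  | andL p ih => exact ih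
  | andR p q ihp ihq => exact Multiset.cons_ne_zero
  | orL p q ihp ihq => exact ihp
  | orR1 p ih => exact Multiset.cons_ne_zero
  | orR2 p ih => exact Multiset.cons_ne_zero
  | impL p q ihp ihq =>
      intro h0
      have hc := congrArg Multiset.card h0
      simp at hc
      exact ihq hc.2
  | impR p ih => exact Multiset.cons_ne_zero
  | allL t p ih => exact ih
  | exR t p ih => exact Multiset.cons_ne_zero
  | exL c hc p ih => exact ih
  | allR c hc p ih => exact Multiset.cons_ne_zero

/-- Every proof's end-sequent occurs in it. -/
lemma occursSeq_self : ∀ {Γ Δ : Multiset Fm} (p : CProof Γ Δ), CProof.occursSeq Γ Δ p Γ Δ := by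
  intro Γ Δ p
  cases p <;> first | exact ⟨rfl, rfl⟩ | exact Or.inl ⟨rfl, rfl⟩

/-! ### Helper constructors for IProv -/

lemma iprov_ax {Γ : Multiset Fm} {A : Fm} (hA : A = Fm.bot ∨ A.isAtom) (h : A ∈ Γ) :
    IProv Γ A := by
  refine ⟨CProof.ax (Or.inr ⟨A, hA, h, Multiset.mem_singleton_self A⟩), ?_⟩
  simp [CProof.isI]

lemma iprov_top {Γ : Multiset Fm} : IProv Γ Fm.top := by
  refine ⟨CProof.ax (Or.inl (Multiset.mem_singleton_self _)), ?_⟩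
  simp [CProof.isI]

lemma iprov_botR {Γ : Multiset Fm} {F : Fm} (h : IProv Γ Fm.bot) : IProv Γ F := by
  obtain ⟨p, hp⟩ := h
  refine ⟨CProof.botR (D := F) (Δ := 0) p, ?_⟩
  exact ⟨by simp, hp⟩

lemma iprov_bot_mem {Γ : Multiset Fm} {F : Fm} (h : Fm.bot ∈ Γ) : IProv Γ F :=
  iprov_botR (iprov_ax (Or.inl rfl) h)

lemma iprov_contrL {Γ : Multiset Fm} {B F : Fm} (h : IProv (B ::ₘ B ::ₘ Γ) F) :
    IProv (B ::ₘ Γ) F := by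
  obtain ⟨p, hp⟩ := h
  exact ⟨CProof.contrL p, by simp [CProof.isI]; exact hp⟩

lemma iprov_andL {Γ : Multiset Fm} {B D F : Fm} (h : IProv (B ::ₘ D ::ₘ (B.conj D) ::ₘ Γ) F) :
    IProv ((B.conj D) ::ₘ Γ) F := by
  obtain ⟨p, hp⟩ := h
  exact ⟨CProof.andL p, by simp [CProof.isI]; exact hp⟩

lemma iprov_andR {Γ : Multiset Fm} {B D : Fm} (hB : IProv Γ B) (hD : IProv Γ D) :
    IProv Γ (B.conj D) := by
  obtain ⟨p, hp⟩ := hB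
  obtain ⟨q, hq⟩ := hD
  exact ⟨CProof.andR (Δ := 0) p q, by simp [CProof.isI]; exact ⟨hp, hq⟩⟩

lemma iprov_orL {Γ : Multiset Fm} {B D F : Fm} (hB : IProv (B ::ₘ Γ) F)
    (hD : IProv (D ::ₘ Γ) F) : IProv ((B.disj D) ::ₘ Γ) F := by
  obtain ⟨p, hp⟩ := hB
  obtain ⟨q, hq⟩ := hD
  exact ⟨CProof.orL p q, by simp [CProof.isI]; exact ⟨hp, hq⟩⟩

lemma iprov_orR1 {Γ : Multiset Fm} {B D : Fm} (h : IProv Γ B) : IProv Γ (B.disj D) := by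
  obtain ⟨p, hp⟩ := h
  exact ⟨CProof.orR1 (Δ := 0) p, by simp [CProof.isI]; exact hp⟩

lemma iprov_orR2 {Γ : Multiset Fm} {B D : Fm} (h : IProv Γ D) : IProv Γ (B.disj D) := by
  obtain ⟨p, hp⟩ := h
  exact ⟨CProof.orR2 (Δ := 0) p, by simp [CProof.isI]; exact hp⟩

lemma iprov_impL {Γ : Multiset Fm} {B D F : Fm} (hB : IProv ((B.imp D) ::ₘ Γ) B)
    (hF : IProv (D ::ₘ Γ) F) : IProv ((B.imp D) ::ₘ Γ) F := by
  obtain ⟨p, hp⟩ := hB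
  obtain ⟨q, hq⟩ := hF
  refine ⟨ccast rfl (by simp) (CProof.impL (Δ := 0) (Θ := {F}) p q), ?_⟩
  rw [ccast_isI]
  exact ⟨by simp, hp, hq⟩

lemma iprov_impR {Γ : Multiset Fm} {B D : Fm} (h : IProv (B ::ₘ Γ) D) :
    IProv Γ (B.imp D) := by
  obtain ⟨p, hp⟩ := h
  exact ⟨CProof.impR (Δ := 0) p, by simp [CProof.isI]; exact hp⟩

lemma iprov_allL {Γ : Multiset Fm} {B F : Fm} (t : Tm)
    (h : IProv ((B.inst t) ::ₘ (Fm.all B) ::ₘ Γ) F) : IProv ((Fm.all B) ::ₘ Γ) F := by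
  obtain ⟨p, hp⟩ := h
  exact ⟨CProof.allL t p, by simp [CProof.isI]; exact hp⟩

lemma iprov_exR {Γ : Multiset Fm} {B : Fm} (t : Tm) (h : IProv Γ (B.inst t)) :
    IProv Γ (Fm.ex B) := by
  obtain ⟨p, hp⟩ := h
  exact ⟨CProof.exR (Δ := 0) t p, by simp [CProof.isI]; exact hp⟩

lemma iprov_exL {Γ : Multiset Fm} {B F : Fm} (c : ℕ)
    (hc : FreshSeq c ((Fm.ex B) ::ₘ Γ) ({F} : Multiset Fm))
    (h : IProv ((B.inst (Tm.const c)) ::ₘ Γ) F) : IProv ((Fm.ex B) ::ₘ Γ) F := by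
  obtain ⟨p, hp⟩ := h
  exact ⟨CProof.exL c hc p, by simp [CProof.isI]; exact hp⟩

lemma iprov_allR {Γ : Multiset Fm} {B : Fm} (c : ℕ)
    (hc : FreshSeq c Γ ({Fm.all B} : Multiset Fm))
    (h : IProv Γ (B.inst (Tm.const c))) : IProv Γ (Fm.all B) := by
  obtain ⟨p, hp⟩ := h
  exact ⟨CProof.allR (Δ := 0) c hc p, by simp [CProof.isI]; exact hp⟩

end S7
namespace S7

/-! ### Renaming constants in proofs -/

lemma renM_id {c : ℕ} (c' : ℕ) {Γ : Multiset Fm} (h : ∀ F ∈ Γ, ¬ F.constIn c) :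
    Γ.map (renF c c') = Γ := by
  have := Multiset.map_congr (f := renF c c') (g := id) rfl (fun F hF => renF_id c' (h F hF))
  simpa using this

lemma isAtom_ren {c c' : ℕ} {A : Fm} (h : A.isAtom) : (renF c c' A).isAtom := by
  cases A <;> simp [Fm.isAtom, renF] at h ⊢

lemma AxSeq_ren {c c' : ℕ} {Γ Δ : Multiset Fm} (h : AxSeq Γ Δ) :
    AxSeq (Γ.map (renF c c')) (Δ.map (renF c c')) := by
  rcases h with h | ⟨A, hA, h1, h2⟩
  · exact Or.inl (Multiset.mem_map.2 ⟨Fm.top, h, rfl⟩)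
  · refine Or.inr ⟨renF c c' A, ?_, Multiset.mem_map.2 ⟨A, h1, rfl⟩, Multiset.mem_map.2 ⟨A, h2, rfl⟩⟩
    rcases hA with rfl | hA
    · exact Or.inl rfl
    · exact Or.inr (isAtom_ren hA)

/-- Transportable packaging of a proof with size and intuitionistic-ness data. -/
def CP (Γ Δ : Multiset Fm) (k : ℕ) (ii : Prop) : Prop :=
  ∃ q : CProof Γ Δ, csize q = k ∧ (ii → q.isI)

theorem renameProof : ∀ (n : ℕ) {Γ Δ : Multiset Fm} (p : CProof Γ Δ), csize p ≤ n →
    ∀ (c c' : ℕ), CP (Γ.map (renF c c')) (Δ.map (renF c c')) (csize p) p.isI := by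
  intro n
  induction n with
  | zero =>
      intro Γ Δ p hsz
      exact absurd (csize_pos p) (by omega)
  | succ n IH =>
      intro Γ Δ p hsz c c'
      cases p with
      | ax h =>
          refine ⟨CProof.ax (AxSeq_ren h), rfl, fun hi => ?_⟩
          simp only [CProof.isI, Multiset.card_map] at hi ⊢
          exact hi
      | contrL p =>
          have hs : csize p ≤ n := by simp [csize] at hsz ⊢; omega
          have step := IH p hs c c'
          simp only [Multiset.map_cons] at step
          obtain ⟨q, hq1, hq2⟩ := step
          simp only [Multiset.map_cons]
          refine ⟨CProof.contrL q, by simp [csize, hq1], fun hi => ?_⟩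
          simp only [CProof.isI, Multiset.card_map] at hi ⊢
          exact ⟨hi.1, hq2 hi.2⟩
      | contrR p =>
          have hs : csize p ≤ n := by simp [csize] at hsz ⊢; omega
          have step := IH p hs c c'
          simp only [Multiset.map_cons] at step
          obtain ⟨q, hq1, hq2⟩ := step
          simp only [Multiset.map_cons]
          refine ⟨CProof.contrR q, by simp [csize, hq1], fun hi => ?_⟩
          simp only [CProof.isI, Multiset.card_cons, Multiset.card_map] at hi ⊢
          exact ⟨hi.1, hq2 hi.2⟩
      | botR p =>
          have hs : csize p ≤ n := by simp [csize] at hsz ⊢; omega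
          have step := IH p hs c c'
          simp only [Multiset.map_cons, renF] at step
          obtain ⟨q, hq1, hq2⟩ := step
          simp only [Multiset.map_cons]
          refine ⟨CProof.botR q, by simp [csize, hq1], fun hi => ?_⟩
          simp only [CProof.isI, Multiset.card_cons, Multiset.card_map] at hi ⊢
          exact ⟨hi.1, hq2 hi.2⟩
      | andL p =>
          have hs : csize p ≤ n := by simp [csize] at hsz ⊢; omega
          have step := IH p hs c c'
          simp only [Multiset.map_cons, renF] at step
          obtain ⟨q, hq1, hq2⟩ := step
          simp only [Multiset.map_cons, renF]
          refine ⟨CProof.andL q, by simp [csize, hq1], fun hi => ?_⟩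
          simp only [CProof.isI, Multiset.card_map] at hi ⊢
          exact ⟨hi.1, hq2 hi.2⟩
      | andR p q =>
          have hsp : csize p ≤ n := by simp [csize] at hsz ⊢; omega
          have hsq : csize q ≤ n := by simp [csize] at hsz ⊢; omega
          have step1 := IH p hsp c c'
          have step2 := IH q hsq c c'
          simp only [Multiset.map_cons] at step1 step2
          obtain ⟨q1, hq1, hq1'⟩ := step1
          obtain ⟨q2, hq2, hq2'⟩ := step2
          simp only [Multiset.map_cons, renF]
          refine ⟨CProof.andR q1 q2, by simp [csize, hq1, hq2], fun hi => ?_⟩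
          simp only [CProof.isI, Multiset.card_cons, Multiset.card_map] at hi ⊢
          exact ⟨hi.1, hq1' hi.2.1, hq2' hi.2.2⟩
      | orL p q =>
          have hsp : csize p ≤ n := by simp [csize] at hsz ⊢; omega
          have hsq : csize q ≤ n := by simp [csize] at hsz ⊢; omega
          have step1 := IH p hsp c c'
          have step2 := IH q hsq c c'
          simp only [Multiset.map_cons] at step1 step2
          obtain ⟨q1, hq1, hq1'⟩ := step1
          obtain ⟨q2, hq2, hq2'⟩ := step2
          simp only [Multiset.map_cons, renF]
          refine ⟨CProof.orL q1 q2, by simp [csize, hq1, hq2], fun hi => ?_⟩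
          simp only [CProof.isI, Multiset.card_map] at hi ⊢
          exact ⟨hi.1, hq1' hi.2.1, hq2' hi.2.2⟩
      | orR1 p =>
          have hs : csize p ≤ n := by simp [csize] at hsz ⊢; omega
          have step := IH p hs c c'
          simp only [Multiset.map_cons] at step
          obtain ⟨q, hq1, hq2⟩ := step
          simp only [Multiset.map_cons, renF]
          refine ⟨CProof.orR1 q, by simp [csize, hq1], fun hi => ?_⟩
          simp only [CProof.isI, Multiset.card_cons, Multiset.card_map] at hi ⊢
          exact ⟨hi.1, hq2 hi.2⟩
      | orR2 p =>
          have hs : csize p ≤ n := by simp [csize] at hsz ⊢; omega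
          have step := IH p hs c c'
          simp only [Multiset.map_cons] at step
          obtain ⟨q, hq1, hq2⟩ := step
          simp only [Multiset.map_cons, renF]
          refine ⟨CProof.orR2 q, by simp [csize, hq1], fun hi => ?_⟩
          simp only [CProof.isI, Multiset.card_cons, Multiset.card_map] at hi ⊢
          exact ⟨hi.1, hq2 hi.2⟩
      | impL p q =>
          have hsp : csize p ≤ n := by simp [csize] at hsz ⊢; omega
          have hsq : csize q ≤ n := by simp [csize] at hsz ⊢; omega
          have step1 := IH p hsp c c'
          have step2 := IH q hsq c c'
          simp only [Multiset.map_cons] at step1 step2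
          obtain ⟨q1, hq1, hq1'⟩ := step1
          obtain ⟨q2, hq2, hq2'⟩ := step2
          simp only [Multiset.map_cons, Multiset.map_add, renF]
          refine ⟨CProof.impL q1 q2, by simp [csize, hq1, hq2]; exact hq1, fun hi => ?_⟩
          simp only [CProof.isI, Multiset.card_add, Multiset.card_map] at hi ⊢
          exact ⟨hi.1, hq1' hi.2.1, hq2' hi.2.2⟩
      | impR p =>
          have hs : csize p ≤ n := by simp [csize] at hsz ⊢; omega
          have step := IH p hs c c'
          simp only [Multiset.map_cons] at step
          obtain ⟨q, hq1, hq2⟩ := step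
          simp only [Multiset.map_cons, renF]
          refine ⟨CProof.impR q, by simp [csize, hq1], fun hi => ?_⟩
          simp only [CProof.isI, Multiset.card_cons, Multiset.card_map] at hi ⊢
          exact ⟨hi.1, hq2 hi.2⟩
      | allL t p =>
          have hs : csize p ≤ n := by simp [csize] at hsz ⊢; omega
          have step := IH p hs c c'
          simp only [Multiset.map_cons, renF, renF_inst] at step
          obtain ⟨q, hq1, hq2⟩ := step
          simp only [Multiset.map_cons, renF]
          refine ⟨CProof.allL (renT c c' t) q, by simp [csize, hq1], fun hi => ?_⟩
          simp only [CProof.isI, Multiset.card_map] at hi ⊢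
          exact ⟨hi.1, hq2 hi.2⟩
      | exR t p =>
          have hs : csize p ≤ n := by simp [csize] at hsz ⊢; omega
          have step := IH p hs c c'
          simp only [Multiset.map_cons, renF, renF_inst] at step
          obtain ⟨q, hq1, hq2⟩ := step
          simp only [Multiset.map_cons, renF]
          refine ⟨CProof.exR (renT c c' t) q, by simp [csize, hq1], fun hi => ?_⟩
          simp only [CProof.isI, Multiset.card_cons, Multiset.card_map] at hi ⊢
          exact ⟨hi.1, hq2 hi.2⟩
      | exL c₀ hc p =>
          rename_i B Γ'
          have hs : csize p ≤ n := by simp [csize] at hsz ⊢; omega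
          set e : ℕ := mcF B + mcM Γ' + mcM Δ + c + c' + c₀ + 1 with he
          have hBc₀ : ¬ B.constIn c₀ := hc.1 (Fm.ex B) (Multiset.mem_cons_self _ _)
          have step1 := IH p hs c₀ e
          have e1 : ((B.inst (Tm.const c₀)) ::ₘ Γ').map (renF c₀ e)
              = (B.inst (Tm.const e)) ::ₘ Γ' := by
            rw [Multiset.map_cons, renF_inst,
              renM_id e (fun F hF => hc.1 F (Multiset.mem_cons_of_mem hF)),
              renF_id e hBc₀]
            simp [renT]
          have e2 : Δ.map (renF c₀ e) = Δ := renM_id e hc.2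
          rw [e1, e2] at step1
          obtain ⟨q1, hq1, hq1'⟩ := step1
          have step2 := IH q1 (by omega) c c'
          have e3 : ((B.inst (Tm.const e)) ::ₘ Γ').map (renF c c')
              = ((renF c c' B).inst (Tm.const e)) ::ₘ Γ'.map (renF c c') := by
            rw [Multiset.map_cons, renF_inst]
            have h4 : renT c c' (Tm.const e) = Tm.const e := by
              simp only [renT]
              rw [if_neg (by omega)]
            rw [h4]
          rw [e3] at step2
          obtain ⟨q2, hq2, hq2'⟩ := step2
          have hfresh : FreshSeq e ((Fm.ex (renF c c' B)) ::ₘ Γ'.map (renF c c'))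
              (Δ.map (renF c c')) := by
            constructor
            · intro F hF
              rcases Multiset.mem_cons.1 hF with rfl | hF
              · intro hcontra
                have h5 : (renF c c' B).constIn e := hcontra
                rcases constIn_renF h5 with h | h
                · omega
                · exact not_constIn_of_le (by omega) h
              · obtain ⟨F0, hF0, rfl⟩ := Multiset.mem_map.1 hF
                intro hcontra
                rcases constIn_renF hcontra with h | h
                · omega
                · exact not_constIn_of_le (le_trans (mcF_le_mcM hF0) (by omega)) h
            · intro F hF
              obtain ⟨F0, hF0, rfl⟩ := Multiset.mem_map.1 hF
              intro hcontra
              rcases constIn_renF hcontra with h | h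
              · omega
              · exact not_constIn_of_le (le_trans (mcF_le_mcM hF0) (by omega)) h
          simp only [Multiset.map_cons, renF]
          refine ⟨CProof.exL e hfresh q2, by simp [csize]; omega, fun hi => ?_⟩
          simp only [CProof.isI, Multiset.card_map] at hi ⊢
          exact ⟨hi.1, hq2' (hq1' hi.2)⟩
      | allR c₀ hc p =>
          rename_i B Δ'
          have hs : csize p ≤ n := by simp [csize] at hsz ⊢; omega
          set e : ℕ := mcF B + mcM Γ + mcM Δ' + c + c' + c₀ + 1 with he
          have hBc₀ : ¬ B.constIn c₀ := hc.2 (Fm.all B) (Multiset.mem_cons_self _ _)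
          have step1 := IH p hs c₀ e
          have e1 : ((B.inst (Tm.const c₀)) ::ₘ Δ').map (renF c₀ e)
              = (B.inst (Tm.const e)) ::ₘ Δ' := by
            rw [Multiset.map_cons, renF_inst,
              renM_id e (fun F hF => hc.2 F (Multiset.mem_cons_of_mem hF)),
              renF_id e hBc₀]
            simp [renT]
          have e2 : Γ.map (renF c₀ e) = Γ := renM_id e hc.1
          rw [e1, e2] at step1
          obtain ⟨q1, hq1, hq1'⟩ := step1
          have step2 := IH q1 (by omega) c c'
          have e3 : ((B.inst (Tm.const e)) ::ₘ Δ').map (renF c c')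
              = ((renF c c' B).inst (Tm.const e)) ::ₘ Δ'.map (renF c c') := by
            rw [Multiset.map_cons, renF_inst]
            have h4 : renT c c' (Tm.const e) = Tm.const e := by
              simp only [renT]
              rw [if_neg (by omega)]
            rw [h4]
          rw [e3] at step2
          obtain ⟨q2, hq2, hq2'⟩ := step2
          have hfresh : FreshSeq e (Γ.map (renF c c'))
              ((Fm.all (renF c c' B)) ::ₘ Δ'.map (renF c c')) := by
            constructor
            · intro F hF
              obtain ⟨F0, hF0, rfl⟩ := Multiset.mem_map.1 hF
              intro hcontra
              rcases constIn_renF hcontra with h | h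
              · omega
              · exact not_constIn_of_le (le_trans (mcF_le_mcM hF0) (by omega)) h
            · intro F hF
              rcases Multiset.mem_cons.1 hF with rfl | hF
              · intro hcontra
                have h5 : (renF c c' B).constIn e := hcontra
                rcases constIn_renF h5 with h | h
                · omega
                · exact not_constIn_of_le (by omega) h
              · obtain ⟨F0, hF0, rfl⟩ := Multiset.mem_map.1 hF
                intro hcontra
                rcases constIn_renF hcontra with h | h
                · omega
                · exact not_constIn_of_le (le_trans (mcF_le_mcM hF0) (by omega)) h
          simp only [Multiset.map_cons, renF]
          refine ⟨CProof.allR e hfresh q2, by simp [csize]; omega, fun hi => ?_⟩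
          simp only [CProof.isI, Multiset.card_cons, Multiset.card_map] at hi ⊢
          exact ⟨hi.1, hq2' (hq1' hi.2)⟩

end S7
namespace S7

/-! ### Weakening on the right -/

theorem succWeaken : ∀ (n : ℕ) {Γ Δ : Multiset Fm} (p : CProof Γ Δ), csize p ≤ n →
    ∀ (Δ'' : Multiset Fm), ∃ q : CProof Γ (Δ + Δ''), csize q = csize p := by
  intro n
  induction n with
  | zero =>
      intro Γ Δ p hsz
      exact absurd (csize_pos p) (by omega)
  | succ n IH =>
      intro Γ Δ p hsz Δ''
      cases p with
      | ax h =>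
          have hax : AxSeq Γ (Δ + Δ'') := by
            rcases h with h | ⟨A, hA, h1, h2⟩
            · exact Or.inl (Multiset.mem_add.2 (Or.inl h))
            · exact Or.inr ⟨A, hA, h1, Multiset.mem_add.2 (Or.inl h2)⟩
          exact ⟨CProof.ax hax, rfl⟩
      | contrL p =>
          have hs : csize p ≤ n := by simp [csize] at hsz ⊢; omega
          obtain ⟨q, hq⟩ := IH p hs Δ''
          exact ⟨CProof.contrL q, by simp [csize, hq]⟩
      | contrR p =>
          have hs : csize p ≤ n := by simp [csize] at hsz ⊢; omega
          have step := IH p hs Δ''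
          rw [Multiset.cons_add, Multiset.cons_add] at step
          obtain ⟨q, hq⟩ := step
          rw [Multiset.cons_add]
          exact ⟨CProof.contrR q, by simp [csize, hq]⟩
      | botR p =>
          have hs : csize p ≤ n := by simp [csize] at hsz ⊢; omega
          have step := IH p hs Δ''
          rw [Multiset.cons_add] at step
          obtain ⟨q, hq⟩ := step
          rw [Multiset.cons_add]
          exact ⟨CProof.botR q, by simp [csize, hq]⟩
      | andL p =>
          have hs : csize p ≤ n := by simp [csize] at hsz ⊢; omega
          obtain ⟨q, hq⟩ := IH p hs Δ''
          exact ⟨CProof.andL q, by simp [csize, hq]⟩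
      | andR p q =>
          have hsp : csize p ≤ n := by simp [csize] at hsz ⊢; omega
          have hsq : csize q ≤ n := by simp [csize] at hsz ⊢; omega
          have step1 := IH p hsp Δ''
          have step2 := IH q hsq Δ''
          rw [Multiset.cons_add] at step1 step2
          obtain ⟨q1, hq1⟩ := step1
          obtain ⟨q2, hq2⟩ := step2
          rw [Multiset.cons_add]
          exact ⟨CProof.andR q1 q2, by simp [csize, hq1, hq2]⟩
      | orL p q =>
          have hsp : csize p ≤ n := by simp [csize] at hsz ⊢; omega
          have hsq : csize q ≤ n := by simp [csize] at hsz ⊢; omega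
          obtain ⟨q1, hq1⟩ := IH p hsp Δ''
          obtain ⟨q2, hq2⟩ := IH q hsq Δ''
          exact ⟨CProof.orL q1 q2, by simp [csize, hq1, hq2]⟩
      | orR1 p =>
          have hs : csize p ≤ n := by simp [csize] at hsz ⊢; omega
          have step := IH p hs Δ''
          rw [Multiset.cons_add] at step
          obtain ⟨q, hq⟩ := step
          rw [Multiset.cons_add]
          exact ⟨CProof.orR1 q, by simp [csize, hq]⟩
      | orR2 p =>
          have hs : csize p ≤ n := by simp [csize] at hsz ⊢; omega
          have step := IH p hs Δ''
          rw [Multiset.cons_add] at step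
          obtain ⟨q, hq⟩ := step
          rw [Multiset.cons_add]
          exact ⟨CProof.orR2 q, by simp [csize, hq]⟩
      | impL p q =>
          have hsq : csize q ≤ n := by simp [csize] at hsz ⊢; omega
          obtain ⟨q2, hq2⟩ := IH q hsq Δ''
          rw [add_assoc]
          exact ⟨CProof.impL p q2, by simp [csize, hq2]⟩
      | impR p =>
          have hs : csize p ≤ n := by simp [csize] at hsz ⊢; omega
          have step := IH p hs Δ''
          rw [Multiset.cons_add] at step
          obtain ⟨q, hq⟩ := step
          rw [Multiset.cons_add]
          exact ⟨CProof.impR q, by simp [csize, hq]⟩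
      | allL t p =>
          have hs : csize p ≤ n := by simp [csize] at hsz ⊢; omega
          obtain ⟨q, hq⟩ := IH p hs Δ''
          exact ⟨CProof.allL t q, by simp [csize, hq]⟩
      | exR t p =>
          have hs : csize p ≤ n := by simp [csize] at hsz ⊢; omega
          have step := IH p hs Δ''
          rw [Multiset.cons_add] at step
          obtain ⟨q, hq⟩ := step
          rw [Multiset.cons_add]
          exact ⟨CProof.exR t q, by simp [csize, hq]⟩
      | exL c₀ hc p =>
          rename_i B Γ'
          have hs : csize p ≤ n := by simp [csize] at hsz ⊢; omega
          set e : ℕ := mcF B + mcM Γ' + mcM Δ + mcM Δ'' + c₀ + 1 with he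
          have hBc₀ : ¬ B.constIn c₀ := hc.1 (Fm.ex B) (Multiset.mem_cons_self _ _)
          have step0 := renameProof (csize p) p (le_refl _) c₀ e
          rw [Multiset.map_cons, renF_inst,
            renM_id e (fun F hF => hc.1 F (Multiset.mem_cons_of_mem hF)),
            renF_id e hBc₀, renM_id e hc.2] at step0
          have hren : renT c₀ e (Tm.const c₀) = Tm.const e := by simp [renT]
          rw [hren] at step0
          obtain ⟨p1, hp1, -⟩ := step0
          obtain ⟨q, hq⟩ := IH p1 (by omega) Δ''
          have hfresh : FreshSeq e ((Fm.ex B) ::ₘ Γ') (Δ + Δ'') := by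
            constructor
            · intro F hF
              rcases Multiset.mem_cons.1 hF with rfl | hF
              · exact not_constIn_of_le (show mcF (Fm.ex B) ≤ e from by simp [mcF]; omega)
              · exact not_constIn_of_le (le_trans (mcF_le_mcM hF) (by omega))
            · intro F hF
              rcases Multiset.mem_add.1 hF with hF | hF
              · exact not_constIn_of_le (le_trans (mcF_le_mcM hF) (by omega))
              · exact not_constIn_of_le (le_trans (mcF_le_mcM hF) (by omega))
          exact ⟨CProof.exL e hfresh q, by simp [csize, hq, hp1]⟩
      | allR c₀ hc p =>
          rename_i B Δ'
          have hs : csize p ≤ n := by simp [csize] at hsz ⊢; omega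
          set e : ℕ := mcF B + mcM Γ + mcM Δ' + mcM Δ'' + c₀ + 1 with he
          have hBc₀ : ¬ B.constIn c₀ := hc.2 (Fm.all B) (Multiset.mem_cons_self _ _)
          have step0 := renameProof (csize p) p (le_refl _) c₀ e
          rw [Multiset.map_cons, renF_inst,
            renM_id e (fun F hF => hc.2 F (Multiset.mem_cons_of_mem hF)),
            renF_id e hBc₀, renM_id e hc.1] at step0
          have hren : renT c₀ e (Tm.const c₀) = Tm.const e := by simp [renT]
          rw [hren] at step0
          obtain ⟨p1, hp1, -⟩ := step0
          have step := IH p1 (by omega) Δ''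
          rw [Multiset.cons_add] at step
          obtain ⟨q, hq⟩ := step
          have hfresh2 : FreshSeq e Γ ((Fm.all B) ::ₘ (Δ' + Δ'')) := by
            constructor
            · intro F hF
              exact not_constIn_of_le (le_trans (mcF_le_mcM hF) (by omega))
            · intro F hF
              rcases Multiset.mem_cons.1 hF with rfl | hF
              · exact not_constIn_of_le (show mcF (Fm.all B) ≤ e from by simp [mcF]; omega)
              · rcases Multiset.mem_add.1 hF with hF | hF
                · exact not_constIn_of_le (le_trans (mcF_le_mcM hF) (by omega))
                · exact not_constIn_of_le (le_trans (mcF_le_mcM hF) (by omega))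
          rw [Multiset.cons_add]
          exact ⟨CProof.allR e hfresh2 q, by simp [csize, hq, hp1]⟩

end S7
namespace S7

/-! ### Transport of proofs along MsGe (assumption strengthening + weakening) -/

theorem msgeTransport : ∀ (n : ℕ) {Γ₂ Δ : Multiset Fm} (p : CProof Γ₂ Δ), csize p ≤ n →
    ∀ {Γ₁ : Multiset Fm}, MsGe Γ₁ Γ₂ →
    ∃ q : CProof Γ₁ Δ, csize q ≤ csize p ∧ (p.isI → q.isI) := by
  intro n
  induction n with
  | zero =>
      intro Γ₂ Δ p hsz
      exact absurd (csize_pos p) (by omega)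
  | succ n IH =>
      intro Γ₂ Δ p hsz Γ₁ hms
      cases p with
      | ax h =>
          rcases h with h | ⟨A, hA, h1, h2⟩
          · exact ⟨CProof.ax (Or.inl h), le_refl _, fun hi => hi⟩
          · have hXA : ∃ X ∈ Γ₁, Fm.ge X A := msge_mem_right hms h1
            obtain ⟨X, hX, hgX⟩ := hXA
            have hXeq : X = A := by
              rcases hA with rfl | hA
              · exact ge_bot_inv hgX
              · cases A <;> simp [Fm.isAtom] at hA
                exact ge_atom_inv hgX
            subst hXeq
            exact ⟨CProof.ax (Or.inr ⟨X, hA, hX, h2⟩), le_refl _, fun hi => hi⟩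
      | contrL p =>
          rename_i B Γ'
          have hs : csize p ≤ n := by simp [csize] at hsz ⊢; omega
          obtain ⟨X, Γ₁', rfl, hgX, h'⟩ := msge_cons_right hms
          obtain ⟨q, hq1, hq2⟩ := IH p hs (msge_cons_ge hgX (msge_cons_ge hgX h'))
          refine ⟨CProof.contrL q, by simp [csize]; omega, fun hi => ?_⟩
          simp only [CProof.isI] at hi ⊢
          exact ⟨hi.1, hq2 hi.2⟩
      | contrR p =>
          have hs : csize p ≤ n := by simp [csize] at hsz ⊢; omega
          obtain ⟨q, hq1, hq2⟩ := IH p hs hms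
          refine ⟨CProof.contrR q, by simp [csize]; omega, fun hi => ?_⟩
          simp only [CProof.isI] at hi ⊢
          exact ⟨hi.1, hq2 hi.2⟩
      | botR p =>
          have hs : csize p ≤ n := by simp [csize] at hsz ⊢; omega
          obtain ⟨q, hq1, hq2⟩ := IH p hs hms
          refine ⟨CProof.botR q, by simp [csize]; omega, fun hi => ?_⟩
          simp only [CProof.isI] at hi ⊢
          exact ⟨hi.1, hq2 hi.2⟩
      | andL p =>
          rename_i B D Γ'
          have hs : csize p ≤ n := by simp [csize] at hsz ⊢; omega
          obtain ⟨X, Γ₁', rfl, hgX, h'⟩ := msge_cons_right hms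
          have hXeq : X = B.conj D := ge_conj_inv hgX
          subst hXeq
          obtain ⟨q, hq1, hq2⟩ :=
            IH p hs (msge_cons_both B (msge_cons_both D (msge_cons_both (B.conj D) h')))
          refine ⟨CProof.andL q, by simp [csize]; omega, fun hi => ?_⟩
          simp only [CProof.isI] at hi ⊢
          exact ⟨hi.1, hq2 hi.2⟩
      | andR p q =>
          have hsp : csize p ≤ n := by simp [csize] at hsz ⊢; omega
          have hsq : csize q ≤ n := by simp [csize] at hsz ⊢; omega
          obtain ⟨q1, hq1, hq1'⟩ := IH p hsp hms
          obtain ⟨q2, hq2, hq2'⟩ := IH q hsq hms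
          refine ⟨CProof.andR q1 q2, by simp [csize]; omega, fun hi => ?_⟩
          simp only [CProof.isI] at hi ⊢
          exact ⟨hi.1, hq1' hi.2.1, hq2' hi.2.2⟩
      | orL p q =>
          rename_i B D Γ'
          have hsp : csize p ≤ n := by simp [csize] at hsz ⊢; omega
          have hsq : csize q ≤ n := by simp [csize] at hsz ⊢; omega
          obtain ⟨X, Γ₁', rfl, hgX, h'⟩ := msge_cons_right hms
          rcases ge_disj_inv hgX with rfl | hgB | hgD
          · obtain ⟨q1, hq1, hq1'⟩ := IH p hsp (msge_cons_both B h')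
            obtain ⟨q2, hq2, hq2'⟩ := IH q hsq (msge_cons_both D h')
            refine ⟨CProof.orL q1 q2, by simp [csize]; omega, fun hi => ?_⟩
            simp only [CProof.isI] at hi ⊢
            exact ⟨hi.1, hq1' hi.2.1, hq2' hi.2.2⟩
          · obtain ⟨q1, hq1, hq1'⟩ := IH p hsp (msge_cons_ge hgB h')
            refine ⟨q1, by simp [csize]; omega, fun hi => ?_⟩
            simp only [CProof.isI] at hi
            exact hq1' hi.2.1
          · obtain ⟨q2, hq2, hq2'⟩ := IH q hsq (msge_cons_ge hgD h')
            refine ⟨q2, by simp [csize]; omega, fun hi => ?_⟩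
            simp only [CProof.isI] at hi
            exact hq2' hi.2.2
      | orR1 p =>
          have hs : csize p ≤ n := by simp [csize] at hsz ⊢; omega
          obtain ⟨q, hq1, hq2⟩ := IH p hs hms
          refine ⟨CProof.orR1 q, by simp [csize]; omega, fun hi => ?_⟩
          simp only [CProof.isI] at hi ⊢
          exact ⟨hi.1, hq2 hi.2⟩
      | orR2 p =>
          have hs : csize p ≤ n := by simp [csize] at hsz ⊢; omega
          obtain ⟨q, hq1, hq2⟩ := IH p hs hms
          refine ⟨CProof.orR2 q, by simp [csize]; omega, fun hi => ?_⟩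
          simp only [CProof.isI] at hi ⊢
          exact ⟨hi.1, hq2 hi.2⟩
      | impL p q =>
          rename_i B D Γ' Δ₀ Θ
          have hsp : csize p ≤ n := by simp [csize] at hsz ⊢; omega
          have hsq : csize q ≤ n := by simp [csize] at hsz ⊢; omega
          obtain ⟨X, Γ₁', rfl, hgX, h'⟩ := msge_cons_right hms
          rcases ge_imp_inv hgX with rfl | hgD
          · obtain ⟨q1, hq1, hq1'⟩ := IH p hsp (msge_cons_both (B.imp D) h')
            obtain ⟨q2, hq2, hq2'⟩ := IH q hsq (msge_cons_both D h')
            refine ⟨CProof.impL q1 q2, by simp [csize]; omega, fun hi => ?_⟩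
            simp only [CProof.isI] at hi ⊢
            exact ⟨hi.1, hq1' hi.2.1, hq2' hi.2.2⟩
          · obtain ⟨q2, hq2, hq2'⟩ := IH q hsq (msge_cons_ge hgD h')
            by_cases hΔ₀ : Δ₀ = 0
            · subst hΔ₀
              refine ⟨ccast rfl (zero_add Θ).symm q2, ?_, fun hi => ?_⟩
              · rw [ccast_csize]; simp [csize]; omega
              · rw [ccast_isI]
                simp only [CProof.isI] at hi
                exact hq2' hi.2.2
            · have step := succWeaken (csize q2) q2 (le_refl _) Δ₀
              rw [add_comm] at step
              obtain ⟨q3, hq3⟩ := step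
              refine ⟨q3, by simp [csize]; omega, fun hi => ?_⟩
              exfalso
              simp only [CProof.isI] at hi
              have h1 := hi.1
              have h2 : Θ ≠ 0 := succ_ne_zero q
              have hcΘ : 1 ≤ Multiset.card Θ :=
                Multiset.card_pos.2 (by exact h2)
              have hcΔ : 1 ≤ Multiset.card Δ₀ :=
                Multiset.card_pos.2 (by exact hΔ₀)
              rw [Multiset.card_add] at h1
              omega
      | impR p =>
          have hs : csize p ≤ n := by simp [csize] at hsz ⊢; omega
          obtain ⟨q, hq1, hq2⟩ := IH p hs (msge_cons_both _ hms)
          refine ⟨CProof.impR q, by simp [csize]; omega, fun hi => ?_⟩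
          simp only [CProof.isI] at hi ⊢
          exact ⟨hi.1, hq2 hi.2⟩
      | allL t p =>
          rename_i B Γ'
          have hs : csize p ≤ n := by simp [csize] at hsz ⊢; omega
          obtain ⟨X, Γ₁', rfl, hgX, h'⟩ := msge_cons_right hms
          have hXeq : X = Fm.all B := ge_all_inv hgX
          subst hXeq
          obtain ⟨q, hq1, hq2⟩ :=
            IH p hs (msge_cons_both (B.inst t) (msge_cons_both (Fm.all B) h'))
          refine ⟨CProof.allL t q, by simp [csize]; omega, fun hi => ?_⟩
          simp only [CProof.isI] at hi ⊢
          exact ⟨hi.1, hq2 hi.2⟩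
      | exR t p =>
          have hs : csize p ≤ n := by simp [csize] at hsz ⊢; omega
          obtain ⟨q, hq1, hq2⟩ := IH p hs hms
          refine ⟨CProof.exR t q, by simp [csize]; omega, fun hi => ?_⟩
          simp only [CProof.isI] at hi ⊢
          exact ⟨hi.1, hq2 hi.2⟩
      | exL c₀ hc p =>
          rename_i B Γ'
          have hs : csize p ≤ n := by simp [csize] at hsz ⊢; omega
          obtain ⟨X, Γ₁', rfl, hgX, h'⟩ := msge_cons_right hms
          have hBc₀ : ¬ B.constIn c₀ := hc.1 (Fm.ex B) (Multiset.mem_cons_self _ _)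
          rcases ge_ex_inv hgX with rfl | ⟨c', hgX'⟩
          · -- rebuild with a fresh eigenvariable
            set e : ℕ := mcF B + mcM Γ' + mcM Γ₁' + mcM Δ + c₀ + 1 with he
            have step0 := renameProof (csize p) p (le_refl _) c₀ e
            rw [Multiset.map_cons, renF_inst,
              renM_id e (fun F hF => hc.1 F (Multiset.mem_cons_of_mem hF)),
              renF_id e hBc₀, renM_id e hc.2] at step0
            have hren : renT c₀ e (Tm.const c₀) = Tm.const e := by simp [renT]
            rw [hren] at step0
            obtain ⟨p1, hp1, hp1'⟩ := step0
            obtain ⟨q, hq1, hq2⟩ := IH p1 (by omega) (msge_cons_both (B.inst (Tm.const e)) h')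
            have hfresh : FreshSeq e ((Fm.ex B) ::ₘ Γ₁') Δ := by
              constructor
              · intro F hF
                rcases Multiset.mem_cons.1 hF with rfl | hF
                · exact not_constIn_of_le (show mcF (Fm.ex B) ≤ e from by simp [mcF]; omega)
                · exact not_constIn_of_le (le_trans (mcF_le_mcM hF) (by omega))
              · intro F hF
                exact not_constIn_of_le (le_trans (mcF_le_mcM hF) (by omega))
            refine ⟨CProof.exL e hfresh q, by simp [csize]; omega, fun hi => ?_⟩
            simp only [CProof.isI] at hi ⊢
            exact ⟨hi.1, hq2 (hp1' hi.2)⟩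
          · -- the matching formula is stronger than an instance
            have step0 := renameProof (csize p) p (le_refl _) c₀ c'
            rw [Multiset.map_cons, renF_inst,
              renM_id c' (fun F hF => hc.1 F (Multiset.mem_cons_of_mem hF)),
              renF_id c' hBc₀, renM_id c' hc.2] at step0
            have hren : renT c₀ c' (Tm.const c₀) = Tm.const c' := by simp [renT]
            rw [hren] at step0
            obtain ⟨p1, hp1, hp1'⟩ := step0
            obtain ⟨q, hq1, hq2⟩ := IH p1 (by omega) (msge_cons_ge hgX' h')
            refine ⟨q, by simp [csize]; omega, fun hi => ?_⟩
            simp only [CProof.isI] at hi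
            exact hq2 (hp1' hi.2)
      | allR c₀ hc p =>
          rename_i B Δ'
          have hs : csize p ≤ n := by simp [csize] at hsz ⊢; omega
          have hBc₀ : ¬ B.constIn c₀ := hc.2 (Fm.all B) (Multiset.mem_cons_self _ _)
          set e : ℕ := mcF B + mcM Γ₂ + mcM Γ₁ + mcM Δ' + c₀ + 1 with he
          have step0 := renameProof (csize p) p (le_refl _) c₀ e
          rw [Multiset.map_cons, renF_inst,
            renM_id e (fun F hF => hc.2 F (Multiset.mem_cons_of_mem hF)),
            renF_id e hBc₀, renM_id e hc.1] at step0
          have hren : renT c₀ e (Tm.const c₀) = Tm.const e := by simp [renT]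
          rw [hren] at step0
          obtain ⟨p1, hp1, hp1'⟩ := step0
          obtain ⟨q, hq1, hq2⟩ := IH p1 (by omega) hms
          have hfresh : FreshSeq e Γ₁ ((Fm.all B) ::ₘ Δ') := by
            constructor
            · intro F hF
              exact not_constIn_of_le (le_trans (mcF_le_mcM hF) (by omega))
            · intro F hF
              rcases Multiset.mem_cons.1 hF with rfl | hF
              · exact not_constIn_of_le (show mcF (Fm.all B) ≤ e from by simp [mcF]; omega)
              · exact not_constIn_of_le (le_trans (mcF_le_mcM hF) (by omega))
          refine ⟨CProof.allR e hfresh q, by simp [csize]; omega, fun hi => ?_⟩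
          simp only [CProof.isI] at hi ⊢
          exact ⟨hi.1, hq2 (hp1' hi.2)⟩

/-- Transport of intuitionistic provability along MsGe. -/
lemma iprov_msge {Γ₁ Γ₂ : Multiset Fm} {F : Fm} (hms : MsGe Γ₁ Γ₂) (h : IProv Γ₂ F) :
    IProv Γ₁ F := by
  obtain ⟨p, hp⟩ := h
  obtain ⟨q, -, hq⟩ := msgeTransport (csize p) p (le_refl _) hms
  exact ⟨q, hq hp⟩

/-- Left weakening for intuitionistic provability. -/
lemma iprov_weakL {Γ : Multiset Fm} {B F : Fm} (h : IProv Γ F) : IProv (B ::ₘ Γ) F :=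
  iprov_msge (msge_cons_left B Γ) h

end S7
namespace S7

/-! ### The invariants -/

def Good (G : Fm) (S : Multiset Fm) : Prop := Fm.bot ∈ S ∨ (G.imp Fm.bot) ∈ S

def INV (G : Fm) (S P : Multiset Fm) : Prop :=
  ∀ F ∈ P, ∀ T : Multiset Fm, MsGe T S → (∀ X ∈ T, DFm X) → IProv T F → IProv T G

lemma good_cons {G : Fm} {S : Multiset Fm} (X : Fm) (h : Good G S) : Good G (X ::ₘ S) := by
  rcases h with h | h
  · exact Or.inl (Multiset.mem_cons_of_mem h)
  · exact Or.inr (Multiset.mem_cons_of_mem h)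

lemma good_msge {G : Fm} {S T : Multiset Fm} (hms : MsGe T S) (h : Good G S) : Good G T := by
  rcases h with h | h
  · obtain ⟨X, hX, hgX⟩ := msge_mem_right hms h
    rw [ge_bot_inv hgX] at hX
    exact Or.inl hX
  · obtain ⟨X, hX, hgX⟩ := msge_mem_right hms h
    rcases ge_imp_inv hgX with rfl | hg
    · exact Or.inr hX
    · rw [ge_bot_inv hg] at hX
      exact Or.inl hX

lemma inv_mono {G : Fm} {S S' P P' : Multiset Fm} (h : INV G S P) (hP : ∀ F ∈ P', F ∈ P)
    (hS : MsGe S' S) : INV G S' P' :=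
  fun F hF T hms hdf hp => h F (hP F hF) T (msge_trans hms hS) hdf hp

/-- Explosion in the presence of a good antecedent that proves `G`. -/
lemma expl {G : Fm} {S : Multiset Fm} (hg : Good G S) (hG : IProv S G) (F : Fm) :
    IProv S F := by
  rcases hg with h | h
  · exact iprov_bot_mem h
  · have hS : S = (G.imp Fm.bot) ::ₘ S.erase (G.imp Fm.bot) := (Multiset.cons_erase h).symm
    rw [hS] at hG ⊢
    exact iprov_impL hG (iprov_bot_mem (Multiset.mem_cons_self _ _))

/-! ### The main lemma -/

theorem main (G : Fm) : ∀ (n : ℕ) (Sc Pc : Multiset Fm) (p : CProof Sc Pc), csize p ≤ n →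
    (∀ X ∈ Sc, DFm X) → (∀ F ∈ Pc, GFm F) → Good G Sc → INV G Sc Pc →
    ∀ S P, CProof.occursSeq Sc Pc p S P → ∃ F ∈ P, IProv S F := by
  intro n
  induction n with
  | zero =>
      intro Sc Pc p hsz
      exact absurd (csize_pos p) (by omega)
  | succ n IH =>
      intro Sc Pc p hsz HD HG Hg Hinv
      cases p with
      | ax h =>
          rintro S P ⟨rfl, rfl⟩
          rcases h with h | ⟨A, hA, h1, h2⟩
          · exact ⟨Fm.top, h, iprov_top⟩
          · exact ⟨A, h2, iprov_ax hA h1⟩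
      | contrL p =>
          rename_i B Γ
          have hszp : csize p ≤ n := by simp [csize] at hsz ⊢; omega
          have hd : ∀ X ∈ B ::ₘ B ::ₘ Γ, DFm X := by
            intro X hX
            rcases Multiset.mem_cons.1 hX with rfl | hX
            · exact HD X (Multiset.mem_cons_self _ _)
            · exact HD X hX
          have hgood : Good G (B ::ₘ B ::ₘ Γ) := good_cons B Hg
          have hinv : INV G (B ::ₘ B ::ₘ Γ) Pc :=
            inv_mono Hinv (fun F hF => hF) (msge_cons_left B (B ::ₘ Γ))
          rintro S P (⟨rfl, rfl⟩ | hocc)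
          · obtain ⟨F, hF, w⟩ := IH _ _ p hszp hd HG hgood hinv _ _ (occursSeq_self p)
            exact ⟨F, hF, iprov_contrL w⟩
          · exact IH _ _ p hszp hd HG hgood hinv S P hocc
      | contrR p =>
          rename_i B Δ
          have hszp : csize p ≤ n := by simp [csize] at hsz ⊢; omega
          have hg : ∀ F ∈ B ::ₘ B ::ₘ Δ, GFm F := by
            intro F hF
            rcases Multiset.mem_cons.1 hF with rfl | hF
            · exact HG F (Multiset.mem_cons_self _ _)
            · exact HG F hF
          have hinv : INV G Sc (B ::ₘ B ::ₘ Δ) := by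
            intro F hF
            rcases Multiset.mem_cons.1 hF with rfl | hF
            · exact Hinv F (Multiset.mem_cons_self _ _)
            · exact Hinv F hF
          rintro S P (⟨rfl, rfl⟩ | hocc)
          · obtain ⟨F, hF, w⟩ := IH _ _ p hszp HD hg Hg hinv _ _ (occursSeq_self p)
            rcases Multiset.mem_cons.1 hF with rfl | hF
            · exact ⟨F, Multiset.mem_cons_self _ _, w⟩
            · exact ⟨F, hF, w⟩
          · exact IH _ _ p hszp HD hg Hg hinv S P hocc
      | botR p =>
          rename_i D Δ
          have hszp : csize p ≤ n := by simp [csize] at hsz ⊢; omega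
          have hg : ∀ F ∈ Fm.bot ::ₘ Δ, GFm F := by
            intro F hF
            rcases Multiset.mem_cons.1 hF with rfl | hF
            · exact GFm.bot
            · exact HG F (Multiset.mem_cons_of_mem hF)
          have hinv : INV G Sc (Fm.bot ::ₘ Δ) := by
            intro F hF
            rcases Multiset.mem_cons.1 hF with rfl | hF
            · intro T hms hdf hp
              exact iprov_botR hp
            · exact Hinv F (Multiset.mem_cons_of_mem hF)
          rintro S P (⟨rfl, rfl⟩ | hocc)
          · obtain ⟨F, hF, w⟩ := IH _ _ p hszp HD hg Hg hinv _ _ (occursSeq_self p)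
            rcases Multiset.mem_cons.1 hF with rfl | hF
            · exact ⟨D, Multiset.mem_cons_self _ _, iprov_botR w⟩
            · exact ⟨F, Multiset.mem_cons_of_mem hF, w⟩
          · exact IH _ _ p hszp HD hg Hg hinv S P hocc
      | andL p =>
          rename_i B D Γ
          have hszp : csize p ≤ n := by simp [csize] at hsz ⊢; omega
          have hBD := DFm_conj_inv (HD _ (Multiset.mem_cons_self _ _))
          have hd : ∀ X ∈ B ::ₘ D ::ₘ (B.conj D) ::ₘ Γ, DFm X := by
            intro X hX
            rcases Multiset.mem_cons.1 hX with rfl | hX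
            · exact hBD.1
            rcases Multiset.mem_cons.1 hX with rfl | hX
            · exact hBD.2
            · exact HD X hX
          have hgood : Good G (B ::ₘ D ::ₘ (B.conj D) ::ₘ Γ) := good_cons B (good_cons D Hg)
          have hinv : INV G (B ::ₘ D ::ₘ (B.conj D) ::ₘ Γ) Pc :=
            inv_mono Hinv (fun F hF => hF)
              (msge_trans (msge_cons_left B _) (msge_cons_left D _))
          rintro S P (⟨rfl, rfl⟩ | hocc)
          · obtain ⟨F, hF, w⟩ := IH _ _ p hszp hd HG hgood hinv _ _ (occursSeq_self p)
            exact ⟨F, hF, iprov_andL w⟩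
          · exact IH _ _ p hszp hd HG hgood hinv S P hocc
      | andR p q =>
          rename_i B D Δ
          have hszp : csize p ≤ n := by simp [csize] at hsz ⊢; omega
          have hszq : csize q ≤ n := by simp [csize] at hsz ⊢; omega
          have hBD := GFm_conj_inv (HG _ (Multiset.mem_cons_self _ _))
          have hgB : ∀ F ∈ B ::ₘ Δ, GFm F := by
            intro F hF
            rcases Multiset.mem_cons.1 hF with rfl | hF
            · exact hBD.1
            · exact HG F (Multiset.mem_cons_of_mem hF)
          have hgD : ∀ F ∈ D ::ₘ Δ, GFm F := by
            intro F hF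
            rcases Multiset.mem_cons.1 hF with rfl | hF
            · exact hBD.2
            · exact HG F (Multiset.mem_cons_of_mem hF)
          -- invariant for the first premise
          have hinvB : INV G Sc (B ::ₘ Δ) := by
            intro F hF
            rcases Multiset.mem_cons.1 hF with rfl | hF
            · -- the conjunct B
              intro T hms hdf hpB
              have hinv2 : INV G T (D ::ₘ Δ) := by
                intro F2 hF2
                rcases Multiset.mem_cons.1 hF2 with rfl | hF2
                · intro T' hms' hdf' hpD
                  have hpB' : IProv T' F := iprov_msge hms' hpB
                  exact Hinv (F.conj F2) (Multiset.mem_cons_self _ _) T'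
                    (msge_trans hms' hms) hdf' (iprov_andR hpB' hpD)
                · intro T' hms' hdf' hp
                  exact Hinv F2 (Multiset.mem_cons_of_mem hF2) T'
                    (msge_trans hms' hms) hdf' hp
              have hgood2 : Good G T := good_msge hms Hg
              obtain ⟨q', hszq', -⟩ := msgeTransport (csize q) q (le_refl _) hms
              obtain ⟨F2, hF2, w2⟩ := IH _ _ q' (by omega) hdf hgD hgood2 hinv2 _ _
                (occursSeq_self q')
              rcases Multiset.mem_cons.1 hF2 with rfl | hF2
              · exact Hinv (F.conj F2) (Multiset.mem_cons_self _ _) T hms hdf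
                  (iprov_andR hpB w2)
              · exact Hinv F2 (Multiset.mem_cons_of_mem hF2) T hms hdf w2
            · exact Hinv F (Multiset.mem_cons_of_mem hF)
          have hinvD : INV G Sc (D ::ₘ Δ) := by
            intro F hF
            rcases Multiset.mem_cons.1 hF with rfl | hF
            · intro T hms hdf hpD
              have hinv2 : INV G T (B ::ₘ Δ) := by
                intro F2 hF2
                rcases Multiset.mem_cons.1 hF2 with rfl | hF2
                · intro T' hms' hdf' hpB
                  have hpD' : IProv T' F := iprov_msge hms' hpD
                  exact Hinv (F2.conj F) (Multiset.mem_cons_self _ _) T'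
                    (msge_trans hms' hms) hdf' (iprov_andR hpB hpD')
                · intro T' hms' hdf' hp
                  exact Hinv F2 (Multiset.mem_cons_of_mem hF2) T'
                    (msge_trans hms' hms) hdf' hp
              have hgood2 : Good G T := good_msge hms Hg
              obtain ⟨p', hszp', -⟩ := msgeTransport (csize p) p (le_refl _) hms
              obtain ⟨F2, hF2, w2⟩ := IH _ _ p' (by omega) hdf hgB hgood2 hinv2 _ _
                (occursSeq_self p')
              rcases Multiset.mem_cons.1 hF2 with rfl | hF2
              · exact Hinv (F2.conj F) (Multiset.mem_cons_self _ _) T hms hdf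
                  (iprov_andR w2 hpD)
              · exact Hinv F2 (Multiset.mem_cons_of_mem hF2) T hms hdf w2
            · exact Hinv F (Multiset.mem_cons_of_mem hF)
          rintro S P (⟨rfl, rfl⟩ | hocc | hocc)
          · obtain ⟨F1, hF1, w1⟩ := IH _ _ p hszp HD hgB Hg hinvB _ _ (occursSeq_self p)
            rcases Multiset.mem_cons.1 hF1 with rfl | hF1
            · obtain ⟨F2, hF2, w2⟩ := IH _ _ q hszq HD hgD Hg hinvD _ _ (occursSeq_self q)
              rcases Multiset.mem_cons.1 hF2 with rfl | hF2
              · exact ⟨F1.conj F2, Multiset.mem_cons_self _ _, iprov_andR w1 w2⟩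
              · exact ⟨F2, Multiset.mem_cons_of_mem hF2, w2⟩
            · exact ⟨F1, Multiset.mem_cons_of_mem hF1, w1⟩
          · exact IH _ _ p hszp HD hgB Hg hinvB S P hocc
          · exact IH _ _ q hszq HD hgD Hg hinvD S P hocc
      | orL p q =>
          rename_i B D Γ
          have hszp : csize p ≤ n := by simp [csize] at hsz ⊢; omega
          have hszq : csize q ≤ n := by simp [csize] at hsz ⊢; omega
          have hBD := DFm_disj_inv (HD _ (Multiset.mem_cons_self _ _))
          have hdB : ∀ X ∈ B ::ₘ Γ, DFm X := by
            intro X hX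
            rcases Multiset.mem_cons.1 hX with rfl | hX
            · exact hBD.1
            · exact HD X (Multiset.mem_cons_of_mem hX)
          have hdD : ∀ X ∈ D ::ₘ Γ, DFm X := by
            intro X hX
            rcases Multiset.mem_cons.1 hX with rfl | hX
            · exact hBD.2
            · exact HD X (Multiset.mem_cons_of_mem hX)
          have hgoodΓ : Fm.bot ∈ Γ ∨ (G.imp Fm.bot) ∈ Γ := by
            rcases Hg with h | h
            · rcases Multiset.mem_cons.1 h with he | h
              · exact absurd he (by simp)
              · exact Or.inl h
            · rcases Multiset.mem_cons.1 h with he | h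
              · exact absurd he (by simp)
              · exact Or.inr h
          have hgoodB : Good G (B ::ₘ Γ) := good_cons B hgoodΓ
          have hgoodD : Good G (D ::ₘ Γ) := good_cons D hgoodΓ
          have hmsB : MsGe (B ::ₘ Γ) ((B.disj D) ::ₘ Γ) := msge_cons_ge (Fm.ge.disjl (Fm.ge.refl B)) (msge_refl Γ)
          have hmsD : MsGe (D ::ₘ Γ) ((B.disj D) ::ₘ Γ) := msge_cons_ge (Fm.ge.disjr (Fm.ge.refl D)) (msge_refl Γ)
          have hinvB : INV G (B ::ₘ Γ) Pc := inv_mono Hinv (fun F hF => hF) hmsB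
          have hinvD : INV G (D ::ₘ Γ) Pc := inv_mono Hinv (fun F hF => hF) hmsD
          rintro S P (⟨rfl, rfl⟩ | hocc | hocc)
          · obtain ⟨F1, hF1, w1⟩ := IH _ _ p hszp hdB HG hgoodB hinvB _ _ (occursSeq_self p)
            obtain ⟨F2, hF2, w2⟩ := IH _ _ q hszq hdD HG hgoodD hinvD _ _ (occursSeq_self q)
            have hG1 : IProv (B ::ₘ Γ) G := Hinv F1 hF1 (B ::ₘ Γ) hmsB hdB w1
            have w1' : IProv (B ::ₘ Γ) F2 := expl hgoodB hG1 F2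
            exact ⟨F2, hF2, iprov_orL w1' w2⟩
          · exact IH _ _ p hszp hdB HG hgoodB hinvB S P hocc
          · exact IH _ _ q hszq hdD HG hgoodD hinvD S P hocc
      | orR1 p =>
          rename_i B D Δ
          have hszp : csize p ≤ n := by simp [csize] at hsz ⊢; omega
          have hBD := GFm_disj_inv (HG _ (Multiset.mem_cons_self _ _))
          have hg : ∀ F ∈ B ::ₘ Δ, GFm F := by
            intro F hF
            rcases Multiset.mem_cons.1 hF with rfl | hF
            · exact hBD.1
            · exact HG F (Multiset.mem_cons_of_mem hF)
          have hinv : INV G Sc (B ::ₘ Δ) := by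
            intro F hF
            rcases Multiset.mem_cons.1 hF with rfl | hF
            · intro T hms hdf hp
              exact Hinv (F.disj D) (Multiset.mem_cons_self _ _) T hms hdf (iprov_orR1 hp)
            · exact Hinv F (Multiset.mem_cons_of_mem hF)
          rintro S P (⟨rfl, rfl⟩ | hocc)
          · obtain ⟨F, hF, w⟩ := IH _ _ p hszp HD hg Hg hinv _ _ (occursSeq_self p)
            rcases Multiset.mem_cons.1 hF with rfl | hF
            · exact ⟨F.disj D, Multiset.mem_cons_self _ _, iprov_orR1 w⟩
            · exact ⟨F, Multiset.mem_cons_of_mem hF, w⟩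
          · exact IH _ _ p hszp HD hg Hg hinv S P hocc
      | orR2 p =>
          rename_i B D Δ
          have hszp : csize p ≤ n := by simp [csize] at hsz ⊢; omega
          have hBD := GFm_disj_inv (HG _ (Multiset.mem_cons_self _ _))
          have hg : ∀ F ∈ D ::ₘ Δ, GFm F := by
            intro F hF
            rcases Multiset.mem_cons.1 hF with rfl | hF
            · exact hBD.2
            · exact HG F (Multiset.mem_cons_of_mem hF)
          have hinv : INV G Sc (D ::ₘ Δ) := by
            intro F hF
            rcases Multiset.mem_cons.1 hF with rfl | hF
            · intro T hms hdf hp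
              exact Hinv (B.disj F) (Multiset.mem_cons_self _ _) T hms hdf (iprov_orR2 hp)
            · exact Hinv F (Multiset.mem_cons_of_mem hF)
          rintro S P (⟨rfl, rfl⟩ | hocc)
          · obtain ⟨F, hF, w⟩ := IH _ _ p hszp HD hg Hg hinv _ _ (occursSeq_self p)
            rcases Multiset.mem_cons.1 hF with rfl | hF
            · exact ⟨B.disj F, Multiset.mem_cons_self _ _, iprov_orR2 w⟩
            · exact ⟨F, Multiset.mem_cons_of_mem hF, w⟩
          · exact IH _ _ p hszp HD hg Hg hinv S P hocc
      | impL p q =>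
          rename_i B D Γ Δ₀ Θ
          have hszp : csize p ≤ n := by simp [csize] at hsz ⊢; omega
          have hszq : csize q ≤ n := by simp [csize] at hsz ⊢; omega
          have hBD := DFm_imp_inv (HD _ (Multiset.mem_cons_self _ _))
          have hgΘ : ∀ F ∈ Θ, GFm F := fun F hF => HG F (Multiset.mem_add.2 (Or.inr hF))
          have hgB : ∀ F ∈ B ::ₘ Δ₀, GFm F := by
            intro F hF
            rcases Multiset.mem_cons.1 hF with rfl | hF
            · exact hBD.1
            · exact HG F (Multiset.mem_add.2 (Or.inl hF))
          have hdD : ∀ X ∈ D ::ₘ Γ, DFm X := by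
            intro X hX
            rcases Multiset.mem_cons.1 hX with rfl | hX
            · exact hBD.2
            · exact HD X (Multiset.mem_cons_of_mem hX)
          have hmsDΓ : MsGe (D ::ₘ Γ) ((B.imp D) ::ₘ Γ) :=
            msge_cons_ge (Fm.ge.imp (Fm.ge.refl D)) (msge_refl Γ)
          have hgoodD : Good G (D ::ₘ Γ) := good_msge hmsDΓ Hg
          have hinvΘ : INV G (D ::ₘ Γ) Θ := by
            intro F hF T hms hdf hp
            exact Hinv F (Multiset.mem_add.2 (Or.inr hF)) T (msge_trans hms hmsDΓ) hdf hp
          -- invariant for the left premise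
          have hinvL : INV G ((B.imp D) ::ₘ Γ) (B ::ₘ Δ₀) := by
            intro F hF
            rcases Multiset.mem_cons.1 hF with rfl | hF
            · -- the body F = B of the clause
              intro T hms hdf hpB
              obtain ⟨X, Γ1', rfl, hgX, h'⟩ := msge_cons_right hms
              rcases ge_imp_inv hgX with rfl | hgD2
              · -- X is the clause itself
                have hms2 : MsGe (D ::ₘ Γ1') (D ::ₘ Γ) := msge_cons_both D h'
                have hmsT2 : MsGe (D ::ₘ Γ1') ((F.imp D) ::ₘ Γ) := msge_cons_ge (Fm.ge.imp (Fm.ge.refl D)) h'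
                obtain ⟨q', hszq', -⟩ := msgeTransport (csize q) q (le_refl _) hms2
                have hd2 : ∀ Y ∈ D ::ₘ Γ1', DFm Y := by
                  intro Y hY
                  rcases Multiset.mem_cons.1 hY with rfl | hY
                  · exact hBD.2
                  · exact hdf Y (Multiset.mem_cons_of_mem hY)
                have hgood2 : Good G (D ::ₘ Γ1') := good_msge hmsT2 Hg
                have hinv2 : INV G (D ::ₘ Γ1') Θ := by
                  intro F2 hF2 T' hms' hdf' hp
                  exact Hinv F2 (Multiset.mem_add.2 (Or.inr hF2)) T'
                    (msge_trans hms' hmsT2) hdf' hp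
                obtain ⟨F2, hF2, w2⟩ := IH _ _ q' (by omega) hd2 hgΘ hgood2 hinv2 _ _
                  (occursSeq_self q')
                have hGT : IProv (D ::ₘ Γ1') G :=
                  Hinv F2 (Multiset.mem_add.2 (Or.inr hF2)) _ hmsT2 hd2 w2
                exact iprov_impL hpB hGT
              · -- X is stronger than D
                have hms2 : MsGe (X ::ₘ Γ1') (D ::ₘ Γ) := msge_cons_ge hgD2 h'
                obtain ⟨q', hszq', -⟩ := msgeTransport (csize q) q (le_refl _) hms2
                have hgood2 : Good G (X ::ₘ Γ1') := good_msge hms Hg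
                have hinv2 : INV G (X ::ₘ Γ1') Θ := by
                  intro F2 hF2 T' hms' hdf' hp
                  exact Hinv F2 (Multiset.mem_add.2 (Or.inr hF2)) T'
                    (msge_trans hms' hms) hdf' hp
                obtain ⟨F2, hF2, w2⟩ := IH _ _ q' (by omega) hdf hgΘ hgood2 hinv2 _ _
                  (occursSeq_self q')
                exact Hinv F2 (Multiset.mem_add.2 (Or.inr hF2)) _ hms hdf w2
            · intro T hms hdf hp
              exact Hinv F (Multiset.mem_add.2 (Or.inl hF)) T hms hdf hp
          rintro S P (⟨rfl, rfl⟩ | hocc | hocc)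
          · obtain ⟨F1, hF1, w1⟩ := IH _ _ p hszp HD hgB Hg hinvL _ _ (occursSeq_self p)
            rcases Multiset.mem_cons.1 hF1 with rfl | hF1
            · obtain ⟨F2, hF2, w2⟩ := IH _ _ q hszq hdD hgΘ hgoodD hinvΘ _ _
                (occursSeq_self q)
              exact ⟨F2, Multiset.mem_add.2 (Or.inr hF2), iprov_impL w1 w2⟩
            · exact ⟨F1, Multiset.mem_add.2 (Or.inl hF1), w1⟩
          · exact IH _ _ p hszp HD hgB Hg hinvL S P hocc
          · exact IH _ _ q hszq hdD hgΘ hgoodD hinvΘ S P hocc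
      | impR p =>
          rename_i B D Δ
          have hszp : csize p ≤ n := by simp [csize] at hsz ⊢; omega
          have hBD := GFm_imp_inv (HG _ (Multiset.mem_cons_self _ _))
          have hd : ∀ X ∈ B ::ₘ Sc, DFm X := by
            intro X hX
            rcases Multiset.mem_cons.1 hX with rfl | hX
            · exact hBD.1
            · exact HD X hX
          have hg : ∀ F ∈ D ::ₘ Δ, GFm F := by
            intro F hF
            rcases Multiset.mem_cons.1 hF with rfl | hF
            · exact hBD.2
            · exact HG F (Multiset.mem_cons_of_mem hF)
          have hgood : Good G (B ::ₘ Sc) := good_cons B Hg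
          have hmsB : MsGe (B ::ₘ Sc) Sc := msge_cons_left B Sc
          have hinv : INV G (B ::ₘ Sc) (D ::ₘ Δ) := by
            intro F hF
            rcases Multiset.mem_cons.1 hF with rfl | hF
            · intro T hms hdf hpD
              have hpBD : IProv T (B.imp F) := iprov_impR (iprov_weakL hpD)
              exact Hinv (B.imp F) (Multiset.mem_cons_self _ _) T
                (msge_trans hms hmsB) hdf hpBD
            · intro T hms hdf hp
              exact Hinv F (Multiset.mem_cons_of_mem hF) T (msge_trans hms hmsB) hdf hp
          rintro S P (⟨rfl, rfl⟩ | hocc)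
          · obtain ⟨F, hF, w⟩ := IH _ _ p hszp hd hg hgood hinv _ _ (occursSeq_self p)
            rcases Multiset.mem_cons.1 hF with rfl | hF
            · exact ⟨B.imp F, Multiset.mem_cons_self _ _, iprov_impR w⟩
            · have hG1 : IProv (B ::ₘ Sc) G :=
                Hinv F (Multiset.mem_cons_of_mem hF) (B ::ₘ Sc) hmsB hd w
              have hD1 : IProv (B ::ₘ Sc) D := expl hgood hG1 D
              exact ⟨B.imp D, Multiset.mem_cons_self _ _, iprov_impR hD1⟩
          · exact IH _ _ p hszp hd hg hgood hinv S P hocc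
      | allL t p =>
          rename_i B Γ
          have hszp : csize p ≤ n := by simp [csize] at hsz ⊢; omega
          have hDB := DFm_all_inv (HD _ (Multiset.mem_cons_self _ _))
          have hd : ∀ X ∈ (B.inst t) ::ₘ (Fm.all B) ::ₘ Γ, DFm X := by
            intro X hX
            rcases Multiset.mem_cons.1 hX with rfl | hX
            · exact DFm_inst t hDB
            · exact HD X hX
          have hgood : Good G ((B.inst t) ::ₘ (Fm.all B) ::ₘ Γ) := good_cons _ Hg
          have hinv : INV G ((B.inst t) ::ₘ (Fm.all B) ::ₘ Γ) Pc :=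
            inv_mono Hinv (fun F hF => hF) (msge_cons_left _ ((Fm.all B) ::ₘ Γ))
          rintro S P (⟨rfl, rfl⟩ | hocc)
          · obtain ⟨F, hF, w⟩ := IH _ _ p hszp hd HG hgood hinv _ _ (occursSeq_self p)
            exact ⟨F, hF, iprov_allL t w⟩
          · exact IH _ _ p hszp hd HG hgood hinv S P hocc
      | exR t p =>
          rename_i B Δ
          have hszp : csize p ≤ n := by simp [csize] at hsz ⊢; omega
          have hGB := GFm_ex_inv (HG _ (Multiset.mem_cons_self _ _))
          have hg : ∀ F ∈ (B.inst t) ::ₘ Δ, GFm F := by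
            intro F hF
            rcases Multiset.mem_cons.1 hF with rfl | hF
            · exact GFm_inst t hGB
            · exact HG F (Multiset.mem_cons_of_mem hF)
          have hinv : INV G Sc ((B.inst t) ::ₘ Δ) := by
            intro F hF
            rcases Multiset.mem_cons.1 hF with rfl | hF
            · intro T hms hdf hp
              exact Hinv (Fm.ex B) (Multiset.mem_cons_self _ _) T hms hdf (iprov_exR t hp)
            · exact Hinv F (Multiset.mem_cons_of_mem hF)
          rintro S P (⟨rfl, rfl⟩ | hocc)
          · obtain ⟨F, hF, w⟩ := IH _ _ p hszp HD hg Hg hinv _ _ (occursSeq_self p)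
            rcases Multiset.mem_cons.1 hF with rfl | hF
            · exact ⟨Fm.ex B, Multiset.mem_cons_self _ _, iprov_exR t w⟩
            · exact ⟨F, Multiset.mem_cons_of_mem hF, w⟩
          · exact IH _ _ p hszp HD hg Hg hinv S P hocc
      | exL c hc p =>
          rename_i B Γ
          have hszp : csize p ≤ n := by simp [csize] at hsz ⊢; omega
          have hDB := DFm_ex_inv (HD _ (Multiset.mem_cons_self _ _))
          have hd : ∀ X ∈ (B.inst (Tm.const c)) ::ₘ Γ, DFm X := by
            intro X hX
            rcases Multiset.mem_cons.1 hX with rfl | hX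
            · exact DFm_inst _ hDB
            · exact HD X (Multiset.mem_cons_of_mem hX)
          have hgoodΓ : Fm.bot ∈ Γ ∨ (G.imp Fm.bot) ∈ Γ := by
            rcases Hg with h | h
            · rcases Multiset.mem_cons.1 h with he | h
              · exact absurd he (by simp)
              · exact Or.inl h
            · rcases Multiset.mem_cons.1 h with he | h
              · exact absurd he (by simp)
              · exact Or.inr h
          have hgood : Good G ((B.inst (Tm.const c)) ::ₘ Γ) := good_cons _ hgoodΓ
          have hms : MsGe ((B.inst (Tm.const c)) ::ₘ Γ) ((Fm.ex B) ::ₘ Γ) :=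
            msge_cons_ge (Fm.ge.ex c (Fm.ge.refl _)) (msge_refl Γ)
          have hinv : INV G ((B.inst (Tm.const c)) ::ₘ Γ) Pc :=
            inv_mono Hinv (fun F hF => hF) hms
          rintro S P (⟨rfl, rfl⟩ | hocc)
          · obtain ⟨F, hF, w⟩ := IH _ _ p hszp hd HG hgood hinv _ _ (occursSeq_self p)
            have hfr : FreshSeq c ((Fm.ex B) ::ₘ Γ) ({F} : Multiset Fm) := by
              refine ⟨hc.1, ?_⟩
              intro F' hF'
              rw [Multiset.mem_singleton] at hF'
              subst hF'
              exact hc.2 F' hF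
            exact ⟨F, hF, iprov_exL c hfr w⟩
          · exact IH _ _ p hszp hd HG hgood hinv S P hocc
      | allR c hc p =>
          exact absurd (HG _ (Multiset.mem_cons_self _ _)) (fun h => GFm_all_inv h)

end S7
/-- Lemma `iproofexists`: let `Γ` be a multiset of
D-formulas and `G` a G-formula such that `G⊃⊥, Γ → G` has a C-proof. Then for
every sequent `Σ → Π` appearing in this proof there is some `F ∈ Π` such that
`Σ → F` has an I-proof. -/
theorem statement_7 (Γ : Multiset Fm) (G : Fm) (hΓ : ∀ X ∈ Γ, DFm X) (hG : GFm G)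
    (p : CProof ((G.imp Fm.bot) ::ₘ Γ) ({G} : Multiset Fm))
    (S P : Multiset Fm) (h : CProof.occursSeq _ _ p S P) :
    ∃ F ∈ P, IProv S F := by
  have hd : ∀ X ∈ (G.imp Fm.bot) ::ₘ Γ, DFm X := by
    intro X hX
    rcases Multiset.mem_cons.1 hX with rfl | hX
    · exact DFm.imp hG DFm.bot
    · exact hΓ X hX
  have hg : ∀ F ∈ ({G} : Multiset Fm), GFm F := by
    intro F hF
    rw [Multiset.mem_singleton] at hF
    subst hF
    exact hG
  have hgood : S7.Good G ((G.imp Fm.bot) ::ₘ Γ) := Or.inr (Multiset.mem_cons_self _ _)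
  have hinv : S7.INV G ((G.imp Fm.bot) ::ₘ Γ) ({G} : Multiset Fm) := by
    intro F hF T hms hdf hp
    rw [Multiset.mem_singleton] at hF
    subst hF
    exact hp
  exact S7.main G (S7.csize p) _ _ p (le_refl _) hd hg hgood hinv S P h
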